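/- arXiv:1207.6628 — 3 statements merged into one kernel-verified Lean document; each statement's English description precedes it below -/
import Mathlib

section
/- Let Q ⊂ ℝⁿ be a closed set and let M ⊂ Q be a locally minimal identifiable set at x̄ for a Fréchet normal v̄ ∈ N̂_Q(x̄). Then Q is prox-regular at x̄ for v̄ if and only if M is prox-regular at x̄ for v̄. -/
open Filter Topology Metric Set
open scoped RealInnerProductSpace

noncomputable section

/-- `ℝⁿ` with the Euclidean structure. -/
abbrev Euc (n : ℕ) : Type := EuclideanSpace ℝ (Fin n)

section Defs

variable {H : Type*} [NormedAddCommGroup H] [InnerProductSpace ℝ H]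
variable {H' : Type*} [NormedAddCommGroup H'] [InnerProductSpace ℝ H']

/-- The inclusion `M ⊆ Q` holds locally around the point `x`. -/
def LocallyIncl {α : Type*} [TopologicalSpace α] (M Q : Set α) (x : α) : Prop :=
  ∃ U ∈ 𝓝 x, M ∩ U ⊆ Q ∩ U

/-- The equality `M = Q` holds locally around the point `x`. -/
def LocallyEq {α : Type*} [TopologicalSpace α] (M Q : Set α) (x : α) : Prop :=
  ∃ U ∈ 𝓝 x, M ∩ U = Q ∩ U

/-- The graph of a set-valued mapping. -/
def svGraph (G : H → Set H') : Set (H × H') := {p | p.2 ∈ G p.1}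

/-- `G⁻¹(W)`, the preimage of a set `W` under the set-valued mapping `G`. -/
def svPreimage (G : H → Set H') (W : Set H') : Set H := {x | (G x ∩ W).Nonempty}

/-- `M` is identifiable relative to the set-valued mapping `G` at `x` for `v ∈ G x`:
the inclusion `gph G ⊆ M × H'` holds locally around `(x, v)`. -/
def IdentifiableRel (G : H → Set H') (M : Set H) (x : H) (v : H') : Prop :=
  LocallyIncl (svGraph G) (M ×ˢ (univ : Set H')) (x, v)

/-- `M` is necessary relative to `G` at `x` for `v ∈ G x`: `x ∈ M` and the function
`y ↦ d(v, G y)`, restricted to `M`, is continuous at `x`. -/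
def NecessaryRel (G : H → Set H') (M : Set H) (x : H) (v : H') : Prop :=
  x ∈ M ∧ ContinuousWithinAt (fun y => EMetric.infEdist v (G y)) M x

/-- `M` is a locally minimal identifiable set relative to `G` at `x` for `v`. -/
def LocallyMinimalIdentifiableRel (G : H → Set H') (M : Set H) (x : H) (v : H') : Prop :=
  IdentifiableRel G M x v ∧ ∀ M' : Set H, IdentifiableRel G M' x v → LocallyIncl M M' x

/-- `M` is a locally maximal necessary set relative to `G` at `x` for `v`. -/
def LocallyMaximalNecessaryRel (G : H → Set H') (M : Set H) (x : H) (v : H') : Prop :=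
  NecessaryRel G M x v ∧ ∀ M' : Set H, NecessaryRel G M' x v → LocallyIncl M' M x

/-- The proximal normal cone to `Q` at `x`. -/
def proxNormalCone (Q : Set H) (x : H) : Set H :=
  {v | x ∈ Q ∧ ∃ r > (0:ℝ), ∀ y ∈ Q, dist (x + r⁻¹ • v) x ≤ dist (x + r⁻¹ • v) y}

/-- The Fréchet normal cone to `Q` at `x`. -/
def frechetNormalCone (Q : Set H) (x : H) : Set H :=
  {v | x ∈ Q ∧ ∀ ε > (0:ℝ), ∃ δ > (0:ℝ), ∀ y ∈ Q, dist y x < δ → ⟪v, y - x⟫ ≤ ε * ‖y - x‖}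

/-- The limiting normal cone to `Q` at `x`. -/
def limitingNormalCone (Q : Set H) (x : H) : Set H :=
  {v | ∃ xs vs : ℕ → H, (∀ i, vs i ∈ frechetNormalCone Q (xs i)) ∧
        Tendsto xs atTop (𝓝 x) ∧ Tendsto vs atTop (𝓝 v)}

/-- `Q` is locally closed at `x`. -/
def LocallyClosedAt (Q : Set H) (x : H) : Prop :=
  ∃ ε > (0:ℝ), IsClosed (Q ∩ closedBall x ε)

/-- `x` is the unique nearest point of `S` to `p`. -/
def IsUniqueNearestPt (S : Set H) (p x : H) : Prop :=
  x ∈ S ∧ ∀ y ∈ S, y ≠ x → dist p x < dist p y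

/-- `Q` is prox-regular at `xb` for `vb`. -/
def ProxRegularAt (Q : Set H) (xb vb : H) : Prop :=
  LocallyClosedAt Q xb ∧ ∃ ε > (0:ℝ), ∃ r > (0:ℝ), ∀ x ∈ Q,
    ∀ v ∈ limitingNormalCone Q x, dist x xb < ε → dist v vb < ε →
      IsUniqueNearestPt (Q ∩ closedBall xb ε) (x + r⁻¹ • v) x

/-- `Q` is Clarke regular at `x`. -/
def ClarkeRegularAt (Q : Set H) (x : H) : Prop :=
  LocallyClosedAt Q x ∧ limitingNormalCone Q x = frechetNormalCone Q x

/-- `M` is identifiable relative to the set `Q` at `xb` for `vb ∈ N_Q(xb)`: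
the graph of the limiting normal cone mapping is contained in `M × H` locally
around `(xb, vb)`. -/
def IdentifiableIn (Q M : Set H) (xb vb : H) : Prop :=
  ∃ W ∈ 𝓝 (xb, vb), ∀ p : H × H, p ∈ W → p.1 ∈ Q → p.2 ∈ limitingNormalCone Q p.1 → p.1 ∈ M

/-- `M` is a locally minimal identifiable set relative to the set `Q` at `xb` for `vb`. -/
def LocallyMinimalIdentifiableIn (Q M : Set H) (xb vb : H) : Prop :=
  IdentifiableIn Q M xb vb ∧ ∀ M' : Set H, IdentifiableIn Q M' xb vb → LocallyIncl M M' xb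

/-- The (Bouligand) tangent cone to `Q` at `xb`. -/
def tangentConeB (Q : Set H) (xb : H) : Set H :=
  {w | ∃ (xs : ℕ → H) (ts : ℕ → ℝ), (∀ i, xs i ∈ Q) ∧ (∀ i, 0 < ts i) ∧
      Tendsto ts atTop (𝓝 0) ∧ Tendsto xs atTop (𝓝 xb) ∧
      Tendsto (fun i => (ts i)⁻¹ • (xs i - xb)) atTop (𝓝 w)}

/-- The set of nearest points of `Q` to `y`. -/
def nearestPts (Q : Set H) (y : H) : Set H := {z | z ∈ Q ∧ ∀ w ∈ Q, dist y z ≤ dist y w}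

/-- A tangent vector `w ∈ T_Q(xb)` is smoothly derivable. -/
def SmoothlyDerivableVec (Q : Set H) (xb w : H) : Prop :=
  ∃ ε > (0:ℝ), ∃ γ : ℝ → H, ContDiffOn ℝ 1 γ (Ico (0:ℝ) ε) ∧ γ 0 = xb ∧
    (∀ t ∈ Ico (0:ℝ) ε, γ t ∈ Q) ∧
    Tendsto (fun t => t⁻¹ • (γ t - xb)) (𝓝[>] (0:ℝ)) (𝓝 w)

/-- `Q` is smoothly derivable at `xb`: every tangent vector is smoothly derivable. -/
def SmoothlyDerivableAt (Q : Set H) (xb : H) : Prop :=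
  ∀ w ∈ tangentConeB Q xb, SmoothlyDerivableVec Q xb w

/-- The normal cone of convex analysis. -/
def convNormalCone (C : Set H) (x : H) : Set H := {v | ∀ y ∈ C, ⟪v, y - x⟫ ≤ 0}

/-- The tangent cone of convex analysis. -/
def convTangentCone (C : Set H) (x : H) : Set H :=
  closure {w | ∃ l : ℝ, 0 ≤ l ∧ ∃ y ∈ C, w = l • (y - x)}

/-- A convex polyhedron: a finite intersection of closed halfspaces. -/
def IsPolyhedron (Q : Set H) : Prop :=
  ∃ (k : ℕ) (a : Fin k → H) (b : Fin k → ℝ), Q = {x | ∀ i, ⟪a i, x⟫ ≤ b i}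

/-- The relative interior of a set: interior relative to its affine span. -/
def relInterior (S : Set H) : Set H :=
  {v | v ∈ S ∧ ∃ ε > (0:ℝ), ∀ y ∈ (affineSpan ℝ S : Set H), dist y v < ε → y ∈ S}

/-- Inner semicontinuity at `xb` of a set-valued map restricted to `S`. -/
def InnerSemicontinuousOnAt (T : H → Set H') (S : Set H) (xb : H) : Prop :=
  ∀ xs : ℕ → H, (∀ i, xs i ∈ S) → Tendsto xs atTop (𝓝 xb) →
    ∀ w ∈ T xb, ∃ ws : ℕ → H', (∀ i, ws i ∈ T (xs i)) ∧ Tendsto ws atTop (𝓝 w)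

/-- `M` is a `C²` submanifold of the ambient space around the point `xb`. -/
def IsC2SubmanifoldAround (M : Set H) (xb : H) : Prop :=
  ∃ (m : ℕ) (F : H → EuclideanSpace ℝ (Fin m)) (U : Set H), IsOpen U ∧ xb ∈ U ∧
    ContDiffOn ℝ 2 F U ∧ Function.Surjective (fderiv ℝ F xb) ∧
    M ∩ U = {x ∈ U | F x = 0}

/-- `Q` is partly smooth with respect to the manifold `M` at `xb` for `vb`. -/
def PartlySmoothAt (Q M : Set H) (xb vb : H) : Prop :=
  ProxRegularAt Q xb vb ∧
  (Submodule.span ℝ (frechetNormalCone Q xb) : Set H) = limitingNormalCone M xb ∧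
  ∃ V ∈ 𝓝 vb, InnerSemicontinuousOnAt (fun x => V ∩ limitingNormalCone Q x) M xb

/-- `ℝⁿ × ℝ` with the Euclidean (ℓ²) structure, hosting epigraphs. -/
abbrev PairL2 (H : Type*) [NormedAddCommGroup H] : Type _ := WithLp 2 (H × ℝ)

/-- Build a point of `PairL2 H` from its components. -/
def pmk (x : H) (r : ℝ) : PairL2 H := (WithLp.equiv 2 (H × ℝ)).symm (x, r)

/-- The epigraph of an extended-real-valued function. -/
def epigraph (f : H → EReal) : Set (PairL2 H) :=
  {p | f ((WithLp.equiv 2 (H × ℝ)) p).1 ≤ (((WithLp.equiv 2 (H × ℝ)) p).2 : EReal)}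

/-- The limiting subdifferential. -/
def limSubdiff (f : H → EReal) (x : H) : Set H :=
  {v | ∃ r : ℝ, f x = (r : EReal) ∧
      pmk v (-1) ∈ limitingNormalCone (epigraph f) (pmk x r)}

/-- The horizon subdifferential. -/
def horizonSubdiff (f : H → EReal) (x : H) : Set H :=
  {v | ∃ r : ℝ, f x = (r : EReal) ∧
      pmk v 0 ∈ limitingNormalCone (epigraph f) (pmk x r)}

/-- The proximal subdifferential. -/
def proxSubdiff (f : H → EReal) (x : H) : Set H :=
  {v | ∃ r : ℝ, f x = (r : EReal) ∧
      pmk v (-1) ∈ proxNormalCone (epigraph f) (pmk x r)}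

/-- A function is Clarke regular at `x` if its epigraph is Clarke regular at `(x, f x)`. -/
def ClarkeRegularFn (f : H → EReal) (x : H) : Prop :=
  ∃ r : ℝ, f x = (r : EReal) ∧ ClarkeRegularAt (epigraph f) (pmk x r)

/-- `M` is identifiable at `xb` for `vb` relative to the function `f` with
subdifferential mapping `D`: for every sequence `(xᵢ, f xᵢ, vᵢ) → (xb, f xb, vb)`
with `vᵢ ∈ D xᵢ`, the points `xᵢ` lie in `M` for all large `i`. -/
def IdentifiableFn (f : H → EReal) (D : H → Set H) (M : Set H) (xb vb : H) : Prop :=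
  ∀ xs vs : ℕ → H, Tendsto xs atTop (𝓝 xb) →
    Tendsto (fun i => f (xs i)) atTop (𝓝 (f xb)) →
    Tendsto vs atTop (𝓝 vb) → (∀ i, vs i ∈ D (xs i)) →
    ∀ᶠ i in atTop, xs i ∈ M

/-- `M` is a locally minimal identifiable set relative to `f` (with subdifferential `D`). -/
def LocallyMinimalIdentifiableFn (f : H → EReal) (D : H → Set H) (M : Set H)
    (xb vb : H) : Prop :=
  IdentifiableFn f D M xb vb ∧ ∀ M' : Set H, IdentifiableFn f D M' xb vb → LocallyIncl M M' xb

/-- The subdifferential of convex analysis for an extended-real-valued function. -/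
def convexSubdiff (f : H → EReal) (x : H) : Set H :=
  {v | ∃ r : ℝ, f x = (r : EReal) ∧ ∀ y : H, ((r + ⟪v, y - x⟫ : ℝ) : EReal) ≤ f y}

/-- Convexity for an extended-real-valued function. -/
def ERealConvexOn (f : H → EReal) : Prop :=
  ∀ x y : H, ∀ a b : ℝ, 0 ≤ a → 0 ≤ b → a + b = 1 →
    f (a • x + b • y) ≤ (a : EReal) * f x + (b : EReal) * f y

/-- A piecewise linear-quadratic function: its domain is the union of finitely many
convex polyhedra, on each of which it agrees with a polynomial of degree at most 2. -/
def IsPiecewiseLinearQuadratic (f : H → EReal) : Prop :=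
  ∃ (k : ℕ) (C : Fin k → Set H), (∀ i, IsPolyhedron (C i)) ∧
    ({x | f x ≠ ⊤} = ⋃ i, C i) ∧
    ∀ i, ∃ (B : H →ₗ[ℝ] H →ₗ[ℝ] ℝ) (l : H →ₗ[ℝ] ℝ) (c : ℝ),
      ∀ x ∈ C i, f x = ((B x x + l x + c : ℝ) : EReal)


/-- Outer semicontinuity of a set-valued mapping (at every point). -/
def OuterSemicontinuousSV (G : H → Set H') : Prop :=
  ∀ (x : H) (v : H') (xs : ℕ → H) (vs : ℕ → H'),
    Tendsto xs atTop (𝓝 x) → Tendsto vs atTop (𝓝 v) →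
    (∀ i, vs i ∈ G (xs i)) → v ∈ G x

end Defs

/-!
Near `(xb, vb)` the normals of `Q` sit only over `M` (identifiability), and by minimality every
point of `M` near `xb` carries a normal of `Q` near `vb`. All other normals are produced as
gradients at maximisers over `Q ∩ closedBall xb R`, either of `q ↦ ⟪v, q - x⟫ - ‖q - x‖² / (2t)`
(proximal normals) or of the tilted `q ↦ ⟪v, q - x⟫ - κ ‖q - x‖`, whose gradient stays within `κ`
of `v`.

If `Q` is prox-regular, a Fréchet normal `w` to `M` at `x` is a limit of proximal normals of `Q` at
maximisers `ζ`: the prox-regularity inequality of a `Q`-normal at `x` near `vb` keeps `ζ` close to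
`x`, hence in `M`, and then the Fréchet inequality of `w` on `M` forces `ζ → x`. So normals of `M`
near `vb` are normals of `Q`, and `M` inherits the inequality.

If `M` is prox-regular, the tilted maximiser lies in `M` (its normal is near `vb`) and inside the
ball (because `vb` is a Fréchet normal at `xb`), which yields `⟪v, q - x⟫ ≤ κ ‖q - x‖` on `Q`. This
bounds how far the proximal maximiser moves from `x`, so it lies in `M` too, and prox-regularity of
`M` at `x` rules out a violation of the inequality for `Q`.
-/

theorem exists_pos_of_eventually_nhds_zero {p : ℝ → Prop} (h : ∀ᶠ t in 𝓝 (0 : ℝ), p t) :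
    ∃ t > 0, p t :=
  ((eventually_mem_nhdsWithin (s := Ioi (0 : ℝ)) (a := 0)).and (nhdsWithin_le_nhds h)).exists

theorem eventually_mul_lt (K : ℝ) {c : ℝ} (hc : 0 < c) : ∀ᶠ t in 𝓝 (0 : ℝ), t * K < c :=
  ((continuous_mul_const K).tendsto' 0 0 (zero_mul K)).eventually_lt_const hc

theorem le_of_sq_le_mul {a c : ℝ} (hc : 0 ≤ c) (h : a ^ 2 ≤ c * a) : a ≤ c := by
  by_contra! hca
  nlinarith

theorem IsMaxOn.isLocalMaxOn_of_dist_lt {α : Type*} [PseudoMetricSpace α] {S : Set α} {xb z : α}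
    {f : α → ℝ} {R : ℝ} (h : IsMaxOn f (S ∩ closedBall xb R) z) (hz : dist z xb < R) :
    IsLocalMaxOn f S z :=
  Filter.mem_of_superset (inter_mem_nhdsWithin S (isOpen_ball.mem_nhds hz))
    fun _ hq => h ⟨hq.1, ball_subset_closedBall hq.2⟩

section

variable {E : Type*} [NormedAddCommGroup E] [InnerProductSpace ℝ E]
variable {S T M Q : Set E} {x z v g xb vb : E} {δ ε R r : ℝ}

theorem frechetNormalCone_subset_limitingNormalCone :
    frechetNormalCone S x ⊆ limitingNormalCone S x :=
  fun v hv => ⟨fun _ => x, fun _ => v, fun _ => hv, tendsto_const_nhds, tendsto_const_nhds⟩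

theorem frechetNormalCone_subset_of_subset (hMQ : M ⊆ Q) (hx : x ∈ M) :
    frechetNormalCone Q x ⊆ frechetNormalCone M x := fun _ hv =>
  ⟨hx, fun ε hε =>
    let ⟨δ, hδ, h⟩ := hv.2 ε hε
    ⟨δ, hδ, fun y hy => h y (hMQ hy)⟩⟩

theorem exists_frechet_near_of_mem_limitingNormalCone (hv : v ∈ limitingNormalCone S x)
    {η : ℝ} (hη : 0 < η) : ∃ z, ∃ u ∈ frechetNormalCone S z, dist z x < η ∧ dist u v < η := by
  obtain ⟨xs, vs, hfr, hxs, hvs⟩ := hv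
  obtain ⟨j, hj⟩ := ((Metric.tendsto_nhds.1 hxs η hη).and (Metric.tendsto_nhds.1 hvs η hη)).exists
  exact ⟨xs j, vs j, hfr j, hj⟩

theorem mem_limitingNormalCone_of_forall_exists_frechet
    (h : ∀ η > 0, ∃ z, ∃ u ∈ frechetNormalCone S z, dist z x < η ∧ dist u v < η) :
    v ∈ limitingNormalCone S x := by
  choose zs us hus hzs hvs using fun j : ℕ => h (1 / (j + 1)) Nat.one_div_pos_of_nat
  have h0 := tendsto_one_div_add_atTop_nhds_zero_nat (𝕜 := ℝ)
  exact ⟨zs, us, hus,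
    tendsto_iff_dist_tendsto_zero.2 (squeeze_zero (fun _ => dist_nonneg) (fun j => (hzs j).le) h0),
    tendsto_iff_dist_tendsto_zero.2 (squeeze_zero (fun _ => dist_nonneg) (fun j => (hvs j).le) h0)⟩

theorem mem_limitingNormalCone_of_tendsto {xs vs : ℕ → E} (hxs : Tendsto xs atTop (𝓝 x))
    (hvs : Tendsto vs atTop (𝓝 v)) (h : ∀ᶠ j in atTop, vs j ∈ limitingNormalCone S (xs j)) :
    v ∈ limitingNormalCone S x := by
  refine mem_limitingNormalCone_of_forall_exists_frechet fun η hη => ?_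
  obtain ⟨j, hj, hxj, hvj⟩ := (h.and ((Metric.tendsto_nhds.1 hxs _ (half_pos hη)).and
    (Metric.tendsto_nhds.1 hvs _ (half_pos hη)))).exists
  obtain ⟨z, u, hu, hz, hu'⟩ := exists_frechet_near_of_mem_limitingNormalCone hj (half_pos hη)
  exact ⟨z, u, hu, by linarith [dist_triangle z (xs j) x], by linarith [dist_triangle u (vs j) v]⟩

theorem mem_limitingNormalCone_of_frechetNormalCone_subset {ρ : ℝ}
    (h : ∀ z, ∀ u ∈ frechetNormalCone S z, dist z xb < ρ → dist u vb < ρ →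
      u ∈ limitingNormalCone T z)
    (hv : v ∈ limitingNormalCone S x) (hx : dist x xb < ρ) (hvρ : dist v vb < ρ) :
    v ∈ limitingNormalCone T x := by
  obtain ⟨xs, vs, hfr, hxs, hvs⟩ := hv
  refine mem_limitingNormalCone_of_tendsto hxs hvs ?_
  filter_upwards [(hxs.dist tendsto_const_nhds).eventually_lt_const hx,
    (hvs.dist tendsto_const_nhds).eventually_lt_const hvρ] with j hxj hvj
  exact h _ _ (hfr j) hxj hvj

theorem mem_frechetNormalCone_of_isLocalMaxOn {f : E → ℝ} {c : ℝ} (hz : z ∈ S)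
    (hmax : IsLocalMaxOn f S z) (hf : ∀ q, ⟪g, q - z⟫ - c * ‖q - z‖ ^ 2 ≤ f q - f z) :
    g ∈ frechetNormalCone S z := by
  refine ⟨hz, fun ε hε => ?_⟩
  obtain ⟨ι, hι, hball⟩ := Metric.mem_nhdsWithin_iff.1 hmax
  refine ⟨min ι (ε / (|c| + 1)), by positivity, fun q hq hqz => ?_⟩
  have hfq : f q ≤ f z := hball ⟨lt_of_lt_of_le hqz (min_le_left _ _), hq⟩
  have hsmall : ‖q - z‖ * (|c| + 1) ≤ ε := by
    rw [← dist_eq_norm, ← le_div_iff₀ (by positivity)]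
    exact (hqz.trans_le (min_le_right _ _)).le
  have hc : c * ‖q - z‖ ^ 2 ≤ |c| * ‖q - z‖ ^ 2 := by gcongr; exact le_abs_self c
  nlinarith [hf q, norm_nonneg (q - z), abs_nonneg c]

theorem sub_smul_mem_frechetNormalCone_of_isLocalMaxOn {t : ℝ} (ht : 0 < t) (hz : z ∈ S)
    (hmax : IsLocalMaxOn (fun q => ⟪v, q - x⟫ - ‖q - x‖ ^ 2 / (2 * t)) S z) :
    v - t⁻¹ • (z - x) ∈ frechetNormalCone S z := by
  refine mem_frechetNormalCone_of_isLocalMaxOn (c := 1 / (2 * t)) hz hmax fun q => le_of_eq ?_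
  have hq : q - x = (z - x) + (q - z) := by abel
  rw [hq, norm_add_sq_real, inner_add_right, inner_sub_left, real_inner_smul_left]
  field_simp
  ring

theorem norm_add_le_norm_add_inner_add_sq {u : E} (hu : u ≠ 0) (h : E) :
    ‖u + h‖ ≤ ‖u‖ + ⟪u, h⟫ / ‖u‖ + ‖h‖ ^ 2 / (2 * ‖u‖) := by
  have ha : 0 < ‖u‖ := norm_pos_iff.2 hu
  have hsq := two_mul_le_add_sq ‖u + h‖ ‖u‖
  rw [norm_add_sq_real] at hsq
  rw [← sub_nonneg]
  have : ‖u‖ + ⟪u, h⟫ / ‖u‖ + ‖h‖ ^ 2 / (2 * ‖u‖) - ‖u + h‖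
      = (2 * ‖u‖ ^ 2 + 2 * ⟪u, h⟫ + ‖h‖ ^ 2 - 2 * ‖u + h‖ * ‖u‖) / (2 * ‖u‖) := by
    field_simp
  rw [this]
  exact div_nonneg (by linarith) (by positivity)

theorem sub_smul_mem_frechetNormalCone_of_isLocalMaxOn_norm {κ : ℝ} (hκ : 0 ≤ κ) (hzx : z ≠ x)
    (hz : z ∈ S) (hmax : IsLocalMaxOn (fun q => ⟪v, q - x⟫ - κ * ‖q - x‖) S z) :
    v - (κ / ‖z - x‖) • (z - x) ∈ frechetNormalCone S z := by
  refine mem_frechetNormalCone_of_isLocalMaxOn (c := κ / (2 * ‖z - x‖)) hz hmax fun q => ?_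
  have hmodel := mul_le_mul_of_nonneg_left
    (norm_add_le_norm_add_inner_add_sq (sub_ne_zero.2 hzx) (q - z)) hκ
  rw [sub_add_sub_cancel'] at hmodel
  have hsplit : ⟪v, q - x⟫ = ⟪v, z - x⟫ + ⟪v, q - z⟫ := by
    rw [← inner_add_right, sub_add_sub_cancel']
  rw [inner_sub_left v, real_inner_smul_left, hsplit]
  have : κ * (‖z - x‖ + ⟪z - x, q - z⟫ / ‖z - x‖ + ‖q - z‖ ^ 2 / (2 * ‖z - x‖))
      = κ * ‖z - x‖ + κ / ‖z - x‖ * ⟪z - x, q - z⟫ + κ / (2 * ‖z - x‖) * ‖q - z‖ ^ 2 := by ring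
  linarith

def UniformlyProximalNear (N : E → Set E) (S : Set E) (xb vb : E) (ε r : ℝ) : Prop :=
  ∀ x ∈ S, ∀ v ∈ N x, dist x xb < ε → dist v vb < ε →
    ∀ y ∈ S, dist y xb ≤ ε → ⟪v, y - x⟫ ≤ r / 2 * ‖y - x‖ ^ 2

theorem dist_add_inv_smul_lt_iff (hr : 0 < r) (x y v : E) :
    dist (x + r⁻¹ • v) x < dist (x + r⁻¹ • v) y ↔ ⟪v, y - x⟫ < r / 2 * ‖y - x‖ ^ 2 := by
  rw [← sq_lt_sq₀ dist_nonneg dist_nonneg, dist_eq_norm, dist_eq_norm, add_sub_cancel_left,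
    show x + r⁻¹ • v - y = r⁻¹ • v - (y - x) by abel, norm_sub_sq_real, real_inner_smul_left]
  have key : r / 2 * ‖y - x‖ ^ 2 - ⟪v, y - x⟫
      = r / 2 * (‖y - x‖ ^ 2 - 2 * (r⁻¹ * ⟪v, y - x⟫)) := by
    field_simp
  rw [← sub_pos, ← sub_pos (a := r / 2 * _), key, mul_pos_iff_of_pos_left (half_pos hr)]
  constructor <;> intro h <;> linarith

theorem ProxRegularAt.uniformlyProximalNear (h : ProxRegularAt S xb vb) :
    ∃ ε > 0, ∃ r > 0, UniformlyProximalNear (limitingNormalCone S) S xb vb ε r := by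
  obtain ⟨-, ε, hε, r, hr, h⟩ := h
  refine ⟨ε, hε, r, hr, fun x hx v hv hxε hvε y hy hyε => ?_⟩
  rcases eq_or_ne y x with rfl | hyx
  · simp
  · exact ((dist_add_inv_smul_lt_iff hr x y v).1
      ((h x hx v hv hxε hvε).2 y ⟨hy, mem_closedBall.2 hyε⟩ hyx)).le

theorem proxRegularAt_of_uniformlyProximalNear (hS : LocallyClosedAt S xb) (hε : 0 < ε)
    (hr : 0 < r) (h : UniformlyProximalNear (limitingNormalCone S) S xb vb ε r) :
    ProxRegularAt S xb vb := by
  refine ⟨hS, ε, hε, 2 * r, by positivity, fun x hx v hv hxε hvε =>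
    ⟨⟨hx, mem_closedBall.2 hxε.le⟩, fun y hy hyx => ?_⟩⟩
  rw [dist_add_inv_smul_lt_iff (by positivity)]
  have hyx' : 0 < r * ‖y - x‖ ^ 2 := by
    have := norm_pos_iff.2 (sub_ne_zero.2 hyx)
    positivity
  linarith [h x hx v hv hxε hvε y hy.1 (mem_closedBall.1 hy.2)]

theorem UniformlyProximalNear.mono {N : E → Set E} {ε' : ℝ}
    (h : UniformlyProximalNear N S xb vb ε r) (hε : ε' ≤ ε) :
    UniformlyProximalNear N S xb vb ε' r :=
  fun x hx v hv hxε hvε y hy hyε =>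
    h x hx v hv (hxε.trans_le hε) (hvε.trans_le hε) y hy (hyε.trans hε)

theorem UniformlyProximalNear.of_subset {NQ NM : E → Set E}
    (h : UniformlyProximalNear NQ Q xb vb ε r) (hMQ : M ⊆ Q)
    (hN : ∀ x ∈ M, ∀ u ∈ NM x, dist x xb < ε → dist u vb < ε → u ∈ NQ x) :
    UniformlyProximalNear NM M xb vb ε r :=
  fun x hx u hu hxε huε y hy hyε =>
    h x (hMQ hx) u (hN x hx u hu hxε huε) hxε huε y (hMQ hy) hyε

theorem UniformlyProximalNear.of_frechet
    (h : UniformlyProximalNear (frechetNormalCone S) S xb vb ε r) :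
    UniformlyProximalNear (limitingNormalCone S) S xb vb ε r := by
  rintro x - v ⟨xs, vs, hfr, hxs, hvs⟩ hxε hvε y hy hyε
  refine le_of_tendsto_of_tendsto (hvs.inner (tendsto_const_nhds.sub hxs))
    (((tendsto_const_nhds.sub hxs).norm.pow 2).const_mul _) ?_
  filter_upwards [(hxs.dist tendsto_const_nhds).eventually_lt_const hxε,
    (hvs.dist tendsto_const_nhds).eventually_lt_const hvε] with j hxj hvj
  exact h _ (hfr j).1 _ (hfr j) hxj hvj y hy hyε

theorem inner_sub_le_of_inner_le {q : E} {η : ℝ} (hη : 0 ≤ η)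
    (hq : ⟪vb, q - xb⟫ ≤ η * ‖q - xb‖) (hqR : dist q xb ≤ R) (hx : dist x xb ≤ ε)
    (hv : dist v vb ≤ ε) :
    ⟪v, q - x⟫ ≤ (η + ε) * R + (‖vb‖ + ε) * ε := by
  have hsplit : ⟪v, q - x⟫ = ⟪vb, q - xb⟫ + ⟪v - vb, q - xb⟫ + ⟪v, xb - x⟫ := by
    rw [← inner_add_left, add_sub_cancel, ← inner_add_right, sub_add_sub_cancel]
  rw [dist_eq_norm] at hqR hx hv
  rw [← norm_neg, neg_sub] at hx
  have hvb : ‖v‖ ≤ ‖vb‖ + ε := by linarith [norm_le_norm_add_norm_sub' v vb]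
  rw [hsplit]
  nlinarith [real_inner_le_norm (v - vb) (q - xb), real_inner_le_norm v (xb - x),
    mul_le_mul hvb hx (norm_nonneg _) ((norm_nonneg _).trans hvb),
    mul_le_mul hv hqR (norm_nonneg _) ((norm_nonneg _).trans hv),
    mul_le_mul_of_nonneg_left hqR hη]

theorem norm_le_of_sq_le_two_mul_inner {d w u : E} {t : ℝ} (ht : 0 < t) (htr : t * r ≤ 1 / 2)
    (hd : ‖d‖ ^ 2 ≤ 2 * t * ⟪w, d⟫) (hu : ⟪u, d⟫ ≤ r / 2 * ‖d‖ ^ 2) :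
    ‖d‖ ≤ t * (4 * dist w u) := by
  have hsplit : ⟪w, d⟫ = ⟪u, d⟫ + ⟪w - u, d⟫ := by
    rw [← inner_add_left, add_sub_cancel]
  have hCS : ⟪w - u, d⟫ ≤ dist w u * ‖d‖ := by
    rw [dist_eq_norm]
    exact real_inner_le_norm _ _
  have hbound := mul_le_mul_of_nonneg_left (hsplit ▸ add_le_add hu hCS)
    (by positivity : (0 : ℝ) ≤ 2 * t)
  have htr' := mul_le_mul_of_nonneg_right htr (sq_nonneg ‖d‖)
  exact le_of_sq_le_mul (by positivity) (by nlinarith)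

theorem IdentifiableIn.exists_radius (h : IdentifiableIn Q M xb vb) :
    ∃ δ > 0, ∀ z ∈ Q, ∀ u ∈ limitingNormalCone Q z, dist z xb < δ → dist u vb < δ → z ∈ M := by
  obtain ⟨W, hW, hWM⟩ := h
  obtain ⟨δ, hδ, hball⟩ := Metric.mem_nhds_iff.1 hW
  refine ⟨δ, hδ, fun z hz u hu hzδ huδ => hWM (z, u) (hball ?_) hz hu⟩
  rw [← ball_prod_same]
  exact ⟨hzδ, huδ⟩

theorem LocallyMinimalIdentifiableIn.exists_normal_near
    (hmin : LocallyMinimalIdentifiableIn Q M xb vb) {θ : ℝ} (hθ : 0 < θ) :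
    ∃ ρ > 0, ∀ z ∈ M, dist z xb < ρ → ∃ u ∈ limitingNormalCone Q z, dist u vb < θ := by
  have hid : IdentifiableIn Q {z | ∃ u ∈ limitingNormalCone Q z, dist u vb < θ} xb vb :=
    ⟨univ ×ˢ ball vb θ, prod_mem_nhds univ_mem (ball_mem_nhds vb hθ),
      fun p hp _ hu => ⟨p.2, hu, hp.2⟩⟩
  obtain ⟨U, hU, hsub⟩ := hmin.2 _ hid
  obtain ⟨ρ, hρ, hball⟩ := Metric.mem_nhds_iff.1 hU
  exact ⟨ρ, hρ, fun z hz hzρ => (hsub ⟨hz, hball hzρ⟩).1⟩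

variable [ProperSpace E]

theorem LocallyMinimalIdentifiableIn.locallyClosedAt (hQ : IsClosed Q)
    (hMQ : M ⊆ Q) (hmin : LocallyMinimalIdentifiableIn Q M xb vb) : LocallyClosedAt M xb := by
  obtain ⟨δ, hδ, hident⟩ := hmin.1.exists_radius
  obtain ⟨ρ, hρ, hsel⟩ := hmin.exists_normal_near (half_pos hδ)
  have hr : min δ ρ / 2 < min δ ρ := half_lt_self (lt_min hδ hρ)
  refine ⟨min δ ρ / 2, by positivity, IsSeqClosed.isClosed fun zs z hzs hz => ?_⟩
  have hzball : z ∈ closedBall xb (min δ ρ / 2) :=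
    isClosed_closedBall.mem_of_tendsto hz (Eventually.of_forall fun n => (hzs n).2)
  choose us hus husδ using fun n => hsel (zs n) (hzs n).1
    (((mem_closedBall.1 (hzs n).2).trans_lt hr).trans_le (min_le_right _ _))
  obtain ⟨u, hu, φ, hφ, hlim⟩ :=
    (isCompact_closedBall vb (δ / 2)).tendsto_subseq fun n => mem_closedBall.2 (husδ n).le
  have huN : u ∈ limitingNormalCone Q z := mem_limitingNormalCone_of_tendsto
    (hz.comp hφ.tendsto_atTop) hlim (Eventually.of_forall fun j => hus (φ j))
  refine ⟨hident z (hQ.mem_of_tendsto hz (Eventually.of_forall fun n => hMQ (hzs n).1)) u huN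
    (((mem_closedBall.1 hzball).trans_lt hr).trans_le (min_le_left _ _)) ?_, hzball⟩
  linarith [mem_closedBall.1 hu]

theorem inner_le_mul_norm_of_identifiable (hQ : IsClosed Q) {κ : ℝ}
    (hident : ∀ z ∈ Q, ∀ u ∈ limitingNormalCone Q z, dist z xb < δ → dist u vb < δ → z ∈ M)
    (hRδ : R ≤ δ) (hκ : 0 < κ) (hRr : R * r ≤ 2 * κ) (hvκ : dist v vb + κ < δ)
    (hx : x ∈ Q) (hxR : dist x xb ≤ R)
    (hvM : ∀ y ∈ M, dist y xb ≤ R → ⟪v, y - x⟫ ≤ r / 2 * ‖y - x‖ ^ 2)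
    (hcap : ∀ q ∈ Q, dist q xb ≤ R → ⟪v, q - x⟫ < κ * (R - dist x xb)) :
    ∀ q ∈ Q, dist q xb ≤ R → ⟪v, q - x⟫ ≤ κ * ‖q - x‖ := by
  obtain ⟨w, hwK, hmax⟩ := ((isCompact_closedBall xb R).inter_left hQ).exists_isMaxOn
    ⟨x, hx, mem_closedBall.2 hxR⟩ (f := fun q => ⟪v, q - x⟫ - κ * ‖q - x‖) (by fun_prop)
  by_contra! hsteep
  obtain ⟨q, hq, hqR, hqκ⟩ := hsteep
  have hwκ : κ * ‖w - x‖ < ⟪v, w - x⟫ := by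
    have : ⟪v, q - x⟫ - κ * ‖q - x‖ ≤ ⟪v, w - x⟫ - κ * ‖w - x‖ := hmax ⟨hq, mem_closedBall.2 hqR⟩
    linarith
  have hwx : w ≠ x := by
    rintro rfl
    simp at hwκ
  have hwx' : ‖w - x‖ < R - dist x xb :=
    lt_of_mul_lt_mul_left (hwκ.trans (hcap w hwK.1 hwK.2)) hκ.le
  have hwR : dist w xb < R := by linarith [dist_triangle w x xb, dist_eq_norm w x]
  have hnormal := sub_smul_mem_frechetNormalCone_of_isLocalMaxOn_norm hκ.le hwx hwK.1
    (hmax.isLocalMaxOn_of_dist_lt hwR)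
  have hwM : w ∈ M := by
    refine hident w hwK.1 _ (frechetNormalCone_subset_limitingNormalCone hnormal)
      (hwR.trans_le hRδ) ?_
    have hnorm : ‖(κ / ‖w - x‖) • (w - x)‖ = κ := by
      rw [norm_smul, Real.norm_eq_abs, abs_div, abs_norm, abs_of_pos hκ,
        div_mul_cancel₀ _ (norm_ne_zero_iff.2 (sub_ne_zero.2 hwx))]
    linarith [dist_triangle (v - (κ / ‖w - x‖) • (w - x)) v vb, dist_self_sub_left v
      ((κ / ‖w - x‖) • (w - x))]
  have hpos : 0 < ‖w - x‖ := norm_pos_iff.2 (sub_ne_zero.2 hwx)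
  have hupper := hvM w hwM (mem_closedBall.1 hwK.2)
  have hr : 2 * κ < r * ‖w - x‖ := by nlinarith
  nlinarith [dist_nonneg (x := x) (y := xb)]

theorem inner_le_sq_div_of_identifiable (hQ : IsClosed Q) {κ t : ℝ}
    (hident : ∀ z ∈ Q, ∀ u ∈ limitingNormalCone Q z, dist z xb < δ → dist u vb < δ → z ∈ M)
    (hRδ : R ≤ δ) (hκ : 0 ≤ κ) (ht : 0 < t) (htr : t * r ≤ 1)
    (hxR : dist x xb + 2 * t * κ ≤ R) (hvκ : 2 * κ + dist v vb ≤ δ) (hx : x ∈ Q)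
    (hvM : ∀ y ∈ M, dist y xb ≤ R → ⟪v, y - x⟫ ≤ r / 2 * ‖y - x‖ ^ 2)
    (hsteep : ∀ q ∈ Q, dist q xb ≤ R → ⟪v, q - x⟫ ≤ κ * ‖q - x‖) :
    ∀ y ∈ Q, dist y xb ≤ R → ⟪v, y - x⟫ ≤ ‖y - x‖ ^ 2 / (2 * t) := by
  obtain ⟨z, hzK, hmax⟩ := ((isCompact_closedBall xb R).inter_left hQ).exists_isMaxOn
    ⟨x, hx, mem_closedBall.2 (by nlinarith)⟩ (f := fun q => ⟪v, q - x⟫ - ‖q - x‖ ^ 2 / (2 * t))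
    (by fun_prop)
  by_contra! hviol
  obtain ⟨y, hy, hyR, hyv⟩ := hviol
  have hzv : ‖z - x‖ ^ 2 / (2 * t) < ⟪v, z - x⟫ := by
    have : ⟪v, y - x⟫ - ‖y - x‖ ^ 2 / (2 * t) ≤ ⟪v, z - x⟫ - ‖z - x‖ ^ 2 / (2 * t) :=
      hmax ⟨hy, mem_closedBall.2 hyR⟩
    linarith
  have hzx : ‖z - x‖ < 2 * t * κ := by
    have hpos : 0 < ‖z - x‖ := by
      refine norm_pos_iff.2 (sub_ne_zero.2 fun hzx => ?_)
      subst hzx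
      simp at hzv
    have := hzv.trans_le (hsteep z hzK.1 hzK.2)
    rw [div_lt_iff₀ (by positivity)] at this
    nlinarith
  have hzR : dist z xb < R := by linarith [dist_triangle z x xb, dist_eq_norm z x]
  have hnormal := sub_smul_mem_frechetNormalCone_of_isLocalMaxOn ht hzK.1
    (hmax.isLocalMaxOn_of_dist_lt hzR)
  have hzM : z ∈ M := by
    refine hident z hzK.1 _ (frechetNormalCone_subset_limitingNormalCone hnormal)
      (hzR.trans_le hRδ) ?_
    have hnorm : ‖t⁻¹ • (z - x)‖ < 2 * κ := by
      rw [norm_smul, Real.norm_of_nonneg (inv_nonneg.2 ht.le), inv_mul_lt_iff₀ ht]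
      linarith
    linarith [dist_triangle (v - t⁻¹ • (z - x)) v vb, dist_self_sub_left v (t⁻¹ • (z - x))]
  have hupper := hvM z hzM (mem_closedBall.1 hzK.2)
  have : r / 2 * ‖z - x‖ ^ 2 ≤ ‖z - x‖ ^ 2 / (2 * t) := by
    rw [le_div_iff₀ (by positivity)]
    nlinarith [sq_nonneg ‖z - x‖]
  linarith

theorem mem_limitingNormalCone_of_mem_frechetNormalCone_of_proximal (hQ : IsClosed Q)
    (hMQ : M ⊆ Q)
    (hident : ∀ z ∈ Q, ∀ u ∈ limitingNormalCone Q z, dist z xb < δ → dist u vb < δ → z ∈ M)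
    (hx : x ∈ M) (hxR : dist x xb < R) (hxδ : dist x xb < δ) {vx w : E}
    (hvx : ∀ y ∈ Q, dist y xb ≤ R → ⟪vx, y - x⟫ ≤ r / 2 * ‖y - x‖ ^ 2)
    (hw : w ∈ frechetNormalCone M x) (hwδ : dist w vb + 4 * dist w vx < δ) :
    w ∈ limitingNormalCone Q x := by
  refine mem_limitingNormalCone_of_forall_exists_frechet fun η hη => ?_
  obtain ⟨ρ, hρ, hfr⟩ := hw.2 (η / 4) (by positivity)
  obtain ⟨t, ht, ht1, htr, htR, htδ, htρ⟩ : ∃ t > 0, t < 1 ∧ t * r < 1 / 2 ∧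
      t * (4 * dist w vx) < R - dist x xb ∧ t * (4 * dist w vx) < δ - dist x xb ∧
      t * (4 * dist w vx) < ρ :=
    exists_pos_of_eventually_nhds_zero ((eventually_lt_nhds one_pos).and
      ((eventually_mul_lt r one_half_pos).and ((eventually_mul_lt _ (sub_pos.2 hxR)).and
        ((eventually_mul_lt _ (sub_pos.2 hxδ)).and (eventually_mul_lt _ hρ)))))
  have hxK : x ∈ Q ∩ closedBall xb R := ⟨hMQ hx, mem_closedBall.2 hxR.le⟩
  obtain ⟨ζ, hζK, hmax⟩ := ((isCompact_closedBall xb R).inter_left hQ).exists_isMaxOn ⟨x, hxK⟩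
    (f := fun q => ⟪w, q - x⟫ - ‖q - x‖ ^ 2 / (2 * t)) (by fun_prop)
  have hζw : ‖ζ - x‖ ^ 2 ≤ 2 * t * ⟪w, ζ - x⟫ := by
    have : ⟪w, x - x⟫ - ‖x - x‖ ^ 2 / (2 * t) ≤ ⟪w, ζ - x⟫ - ‖ζ - x‖ ^ 2 / (2 * t) := hmax hxK
    norm_num at this
    rw [← div_le_iff₀' (by positivity)]
    linarith
  have hζB : ‖ζ - x‖ ≤ t * (4 * dist w vx) :=
    norm_le_of_sq_le_two_mul_inner ht htr.le hζw (hvx ζ hζK.1 hζK.2)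
  have hζR : dist ζ xb < R := by linarith [dist_triangle ζ x xb, dist_eq_norm ζ x]
  have hnormal := sub_smul_mem_frechetNormalCone_of_isLocalMaxOn ht hζK.1
    (hmax.isLocalMaxOn_of_dist_lt hζR)
  have hdist : dist (w - t⁻¹ • (ζ - x)) w = t⁻¹ * ‖ζ - x‖ := by
    rw [dist_self_sub_left, norm_smul, Real.norm_of_nonneg (inv_nonneg.2 ht.le)]
  have hζM : ζ ∈ M := by
    refine hident ζ hζK.1 _ (frechetNormalCone_subset_limitingNormalCone hnormal)
      (by linarith [dist_triangle ζ x xb, dist_eq_norm ζ x]) ?_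
    have : t⁻¹ * ‖ζ - x‖ ≤ 4 * dist w vx := by
      rw [inv_mul_le_iff₀ ht]
      exact hζB
    linarith [dist_triangle (w - t⁻¹ • (ζ - x)) w vb]
  have hζη : ‖ζ - x‖ ≤ t * (η / 2) := by
    have := mul_le_mul_of_nonneg_left (hfr ζ hζM (by rw [dist_eq_norm]; linarith))
      (by positivity : (0 : ℝ) ≤ 2 * t)
    exact le_of_sq_le_mul (by positivity) (by linarith)
  refine ⟨ζ, _, hnormal, ?_, ?_⟩
  · rw [dist_eq_norm]
    nlinarith
  · rw [hdist, inv_mul_lt_iff₀ ht]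
    nlinarith

theorem proxRegularAt_of_identifiableIn (hQ : IsClosed Q) (hMQ : M ⊆ Q)
    (hvb : vb ∈ frechetNormalCone Q xb) (hid : IdentifiableIn Q M xb vb)
    (hM : ProxRegularAt M xb vb) : ProxRegularAt Q xb vb := by
  obtain ⟨δ, hδ, hident⟩ := hid.exists_radius
  obtain ⟨ε₀, hε₀, r, -, hprox⟩ := hM.uniformlyProximalNear
  obtain ⟨κ, hκδ⟩ : ∃ κ, δ = 4 * κ := ⟨δ / 4, by ring⟩
  have hκ : 0 < κ := by linarith
  obtain ⟨ρ, hρ, hvbρ⟩ := hvb.2 (κ / 4) (by positivity)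
  obtain ⟨R, hR, hRρ, hRδ, hRε₀, hRr⟩ : ∃ R > 0, R < ρ ∧ R < δ ∧ R < ε₀ ∧ R * r < 2 * κ :=
    exists_pos_of_eventually_nhds_zero ((eventually_lt_nhds hρ).and ((eventually_lt_nhds hδ).and
      ((eventually_lt_nhds hε₀).and (eventually_mul_lt r (by positivity)))))
  obtain ⟨t, ht, htr, htR⟩ : ∃ t > 0, t * r < 1 ∧ t * (4 * κ) < R :=
    exists_pos_of_eventually_nhds_zero ((eventually_mul_lt r one_pos).and (eventually_mul_lt _ hR))
  obtain ⟨ε, hε, hεR, hεκ, hεε₀, hε1, hεcap⟩ : ∃ ε > 0, ε < R / 2 ∧ ε < κ ∧ ε < ε₀ ∧ ε < 1 ∧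
      ε * (R + ‖vb‖ + 1 + κ) < 3 * κ * R / 4 :=
    exists_pos_of_eventually_nhds_zero ((eventually_lt_nhds (half_pos hR)).and
      ((eventually_lt_nhds hκ).and ((eventually_lt_nhds hε₀).and ((eventually_lt_nhds one_pos).and
        (eventually_mul_lt _ (by positivity))))))
  refine proxRegularAt_of_uniformlyProximalNear ⟨1, one_pos, hQ.inter isClosed_closedBall⟩ hε
    (inv_pos.2 ht) (UniformlyProximalNear.of_frechet ?_)
  intro x hx v hv hxε hvε y hy hyε
  have hxM : x ∈ M :=
    hident x hx v (frechetNormalCone_subset_limitingNormalCone hv) (by linarith) (by linarith)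
  have hvM : ∀ y ∈ M, dist y xb ≤ R → ⟪v, y - x⟫ ≤ r / 2 * ‖y - x‖ ^ 2 := fun y hy hyR =>
    hprox x hxM v (frechetNormalCone_subset_limitingNormalCone
      (frechetNormalCone_subset_of_subset hMQ hxM hv)) (by linarith) (by linarith) y hy
      (by linarith)
  have hcap : ∀ q ∈ Q, dist q xb ≤ R → ⟪v, q - x⟫ < κ * (R - dist x xb) := fun q hq hqR => by
    have := inner_sub_le_of_inner_le (by positivity) (hvbρ q hq (hqR.trans_lt hRρ)) hqR hxε.le
      hvε.le
    nlinarith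
  have hsteep := inner_le_mul_norm_of_identifiable hQ hident hRδ.le hκ hRr.le (by linarith) hx
    (by linarith) hvM hcap
  calc ⟪v, y - x⟫ ≤ ‖y - x‖ ^ 2 / (2 * t) :=
        inner_le_sq_div_of_identifiable hQ hident hRδ.le hκ.le ht htr.le (by linarith)
          (by linarith) hx hvM hsteep y hy (by linarith)
    _ = t⁻¹ / 2 * ‖y - x‖ ^ 2 := by ring

theorem proxRegularAt_of_locallyMinimalIdentifiableIn (hQ : IsClosed Q) (hMQ : M ⊆ Q)
    (hmin : LocallyMinimalIdentifiableIn Q M xb vb) (hQpr : ProxRegularAt Q xb vb) :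
    ProxRegularAt M xb vb := by
  obtain ⟨δ, hδ, hident⟩ := hmin.1.exists_radius
  obtain ⟨εQ, hεQ, r, hr, hprox⟩ := hQpr.uniformlyProximalNear
  obtain ⟨ρ, hρ, hsel⟩ := hmin.exists_normal_near (lt_min (by positivity : 0 < δ / 10) hεQ)
  obtain ⟨ε, hε, hερ, hεQ', hεδ⟩ : ∃ ε > 0, ε < ρ ∧ ε < εQ ∧ ε < δ / 10 :=
    exists_pos_of_eventually_nhds_zero ((eventually_lt_nhds hρ).and
      ((eventually_lt_nhds hεQ).and (eventually_lt_nhds (by positivity))))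
  have hfr : ∀ x, ∀ w ∈ frechetNormalCone M x, dist x xb < ε → dist w vb < ε →
      w ∈ limitingNormalCone Q x := by
    intro x w hw hxε hwε
    obtain ⟨vx, hvx, hvxθ⟩ := hsel x hw.1 (hxε.trans hερ)
    have hvxθ' := lt_min_iff.1 hvxθ
    refine mem_limitingNormalCone_of_mem_frechetNormalCone_of_proximal hQ hMQ hident hw.1
      (hxε.trans hεQ') (by linarith)
      (hprox x (hMQ hw.1) vx hvx (by linarith) hvxθ'.2) hw ?_
    linarith [dist_triangle w vb vx, dist_comm vx vb]
  exact proxRegularAt_of_uniformlyProximalNear (hmin.locallyClosedAt hQ hMQ)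
    hε hr ((hprox.mono hεQ'.le).of_subset hMQ fun x _ u hu hxε huε =>
      mem_limitingNormalCone_of_frechetNormalCone_subset hfr hu hxε huε)

end

/-- prox-regularity under local minimality. -/
theorem statement13 {n : ℕ} (Q : Set (Euc n)) (hQ : IsClosed Q)
    (M : Set (Euc n)) (hMQ : M ⊆ Q) (xb vb : Euc n)
    (hvb : vb ∈ frechetNormalCone Q xb)
    (hmin : LocallyMinimalIdentifiableIn Q M xb vb) :
    ProxRegularAt Q xb vb ↔ ProxRegularAt M xb vb :=
  ⟨proxRegularAt_of_locallyMinimalIdentifiableIn hQ hMQ hmin,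
    proxRegularAt_of_identifiableIn hQ hMQ hvb hmin.1⟩
end
end

section
/- (Polyhedral reduction) Let Q ⊂ ℝⁿ be a convex polyhedron, x̄ ∈ Q, and v̄ ∈ N_Q(x̄). Let K := K_Q(x̄, v̄) = T_Q(x̄) ∩ v̄^⊥ be the critical cone. Then the translated graph gph N_Q − (x̄, v̄) coincides with gph N_K locally around (0, 0); that is, for all (w, u) sufficiently near (0,0), v̄ + u ∈ N_Q(x̄ + w) if and only if u ∈ N_K(w). -/
open Filter Topology Metric Set
open scoped RealInnerProductSpace

noncomputable section

section FarkasAux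

variable {E : Type*} [NormedAddCommGroup E] [InnerProductSpace ℝ E]

section Cone
variable {ι : Type*} [Fintype ι] [FiniteDimensional ℝ E] (g : ι → E)

/-- One step of Carathéodory reduction for cones. -/
lemma carath_step (σ : ι → ℝ) (hσ : ∀ i, 0 ≤ σ i)
    (hdep : ¬ LinearIndependent ℝ (fun j : {i // σ i ≠ 0} => g j)) :
    ∃ τ : ι → ℝ, (∀ i, 0 ≤ τ i) ∧ ∑ i, τ i • g i = ∑ i, σ i • g i ∧
      (Finset.univ.filter fun i => τ i ≠ 0) ⊂ (Finset.univ.filter fun i => σ i ≠ 0) := by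
  classical
  obtain ⟨d0, hd0sum, j0, hj0⟩ := Fintype.not_linearIndependent_iff.1 hdep
  have hd : ∃ d : {i // σ i ≠ 0} → ℝ, ∑ j, d j • g j = 0 ∧ ∃ j, 0 < d j := by
    rcases lt_or_ge 0 (d0 j0) with h | h
    · exact ⟨d0, hd0sum, j0, h⟩
    · refine ⟨-d0, by simp [hd0sum], j0, ?_⟩
      simp only [Pi.neg_apply]
      cases lt_or_eq_of_le h with
      | inl h => linarith
      | inr h => exact absurd h hj0
  obtain ⟨d, hdsum, jpos, hjpos⟩ := hd
  set D : ι → ℝ := fun i => if h : σ i ≠ 0 then d ⟨i, h⟩ else 0 with hD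
  have hDz : ∀ i, ¬ (σ i ≠ 0) → D i • g i = 0 := by
    intro i h
    have : D i = 0 := by simp only [hD, dif_neg h]
    rw [this, zero_smul]
  have hDsum : ∑ i, D i • g i = 0 := by
    calc ∑ i, D i • g i
        = ∑ i ∈ Finset.univ.filter (fun i => σ i ≠ 0), D i • g i :=
          (Finset.sum_filter_of_ne (fun i _ h => by by_contra hc; exact h (hDz i (not_ne_iff.2 hc)))).symm
      _ = ∑ j : {i // σ i ≠ 0}, D j.1 • g j.1 :=
          Finset.sum_subtype _ (fun x => by simp) (fun i => D i • g i)
      _ = ∑ j : {i // σ i ≠ 0}, d j • g j.1 :=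
          Finset.sum_congr rfl fun j _ => by simp only [hD, dif_pos j.2]
      _ = 0 := hdsum
  set s : Finset ι := Finset.univ.filter fun i => 0 < D i with hs
  have hsne : s.Nonempty := by
    refine ⟨jpos.1, ?_⟩
    simp only [hs, Finset.mem_filter, Finset.mem_univ, true_and, hD]
    rw [dif_pos jpos.2]
    exact hjpos
  set r : ℝ := s.inf' hsne fun i => σ i / D i with hr
  have hr0 : 0 ≤ r := Finset.le_inf' hsne _ fun i hi =>
    div_nonneg (hσ i) (le_of_lt (by simpa [hs] using hi))
  obtain ⟨j, hjs, hjr⟩ := Finset.exists_mem_eq_inf' hsne fun i => σ i / D i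
  have hDj : 0 < D j := by simpa [hs] using hjs
  refine ⟨fun i => σ i - r * D i, ?_, ?_, ?_⟩
  · intro i
    show 0 ≤ σ i - r * D i
    rcases lt_or_ge 0 (D i) with h | h
    · have h1 : r ≤ σ i / D i := by
        rw [hr]; exact Finset.inf'_le _ (by simp [hs, h])
      have h2 := (le_div_iff₀ h).1 h1
      linarith
    · have := mul_nonpos_of_nonneg_of_nonpos hr0 h
      have := hσ i
      linarith
  · simp only [sub_smul, Finset.sum_sub_distrib, mul_smul, ← Finset.smul_sum, hDsum,
      smul_zero, sub_zero]
  · rw [Finset.ssubset_iff_of_subset]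
    · refine ⟨j, ?_, ?_⟩
      · simp only [Finset.mem_filter, Finset.mem_univ, true_and]
        intro h
        have hDj0 : D j = 0 := by
          simp only [hD]; rw [dif_neg (not_ne_iff.2 h)]
        rw [hDj0] at hDj; exact lt_irrefl 0 hDj
      · simp only [Finset.mem_filter, Finset.mem_univ, true_and, not_not]
        show σ j - r * D j = 0
        rw [hr, hjr, div_mul_cancel₀ _ (ne_of_gt hDj), sub_self]
    · intro i hi
      simp only [Finset.mem_filter, Finset.mem_univ, true_and] at hi ⊢
      intro hc
      apply hi
      have hDi : D i = 0 := by
        simp only [hD]; rw [dif_neg (not_ne_iff.2 hc)]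
      show σ i - r * D i = 0
      rw [hc, hDi]; ring

/-- Carathéodory for cones: any conical combination can be realised with linearly
independent support. -/
lemma carath (σ : ι → ℝ) (hσ : ∀ i, 0 ≤ σ i) :
    ∃ τ : ι → ℝ, (∀ i, 0 ≤ τ i) ∧ ∑ i, τ i • g i = ∑ i, σ i • g i ∧
      LinearIndependent ℝ (fun j : {i // τ i ≠ 0} => g j) := by
  classical
  suffices h : ∀ N : ℕ, ∀ σ : ι → ℝ, (Finset.univ.filter fun i => σ i ≠ 0).card ≤ N →
      (∀ i, 0 ≤ σ i) → ∃ τ : ι → ℝ, (∀ i, 0 ≤ τ i) ∧ ∑ i, τ i • g i = ∑ i, σ i • g i ∧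
      LinearIndependent ℝ (fun j : {i // τ i ≠ 0} => g j) by
    exact h _ σ le_rfl hσ
  intro N
  induction N with
  | zero =>
    intro σ hcard hσ
    have hzero : ∀ i, σ i = 0 := by
      intro i
      by_contra hc
      have : i ∈ Finset.univ.filter fun i => σ i ≠ 0 := by simp [hc]
      have := Finset.card_pos.2 ⟨i, this⟩
      omega
    refine ⟨σ, hσ, rfl, ?_⟩
    haveI : IsEmpty {i // σ i ≠ 0} := ⟨fun j => j.2 (hzero j.1)⟩
    exact linearIndependent_empty_type
  | succ N ih =>
    intro σ hcard hσ
    by_cases hli : LinearIndependent ℝ (fun j : {i // σ i ≠ 0} => g j)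
    · exact ⟨σ, hσ, rfl, hli⟩
    · obtain ⟨τ, hτ0, hτsum, hτss⟩ := carath_step g σ hσ hli
      have : (Finset.univ.filter fun i => τ i ≠ 0).card ≤ N := by
        have := Finset.card_lt_card hτss
        omega
      obtain ⟨τ', h1, h2, h3⟩ := ih τ this hτ0
      exact ⟨τ', h1, h2.trans hτsum, h3⟩



lemma bound_of_linIndep (s : Finset ι)
    (hs : LinearIndependent ℝ (fun i : {x // x ∈ s} => g i)) :
    ∃ C : ℝ, 0 ≤ C ∧ ∀ τ : ι → ℝ, (∀ i, i ∉ s → τ i = 0) →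
      ∀ i, |τ i| ≤ C * ‖∑ j, τ j • g j‖ := by
  classical
  set T : ({x // x ∈ s} → ℝ) →ₗ[ℝ] E :=
    { toFun := fun c => ∑ i, c i • g i.1
      map_add' := by intros x y; simp [add_smul, Finset.sum_add_distrib]
      map_smul' := by intros m x; simp [smul_smul, Finset.smul_sum] } with hT
  have hker : LinearMap.ker T = ⊥ := by
    rw [LinearMap.ker_eq_bot']
    intro c hc
    funext i
    exact Fintype.linearIndependent_iff.1 hs c hc i
  obtain ⟨L, hL⟩ := T.exists_leftInverse_of_injective hker
  set Lc := L.toContinuousLinearMap with hLc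
  refine ⟨‖Lc‖, norm_nonneg _, ?_⟩
  intro τ hτ i
  set c : {x // x ∈ s} → ℝ := fun i => τ i.1 with hc
  have hTc : T c = ∑ j, τ j • g j := by
    show ∑ i : {x // x ∈ s}, τ i.1 • g i.1 = _
    rw [← Finset.sum_subtype s (fun x => Iff.rfl) (fun j => τ j • g j)]
    exact Finset.sum_subset (Finset.subset_univ s)
      (fun j _ hj => by rw [hτ j (by simpa using hj), zero_smul])
  by_cases hi : i ∈ s
  · have h1 : |c ⟨i, hi⟩| ≤ ‖c‖ := by
      have := norm_le_pi_norm c ⟨i, hi⟩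
      simpa [Real.norm_eq_abs] using this
    have h2 : ‖c‖ = ‖Lc (T c)‖ := by
      have : L (T c) = c := by
        have := LinearMap.congr_fun hL c
        simpa using this
      rw [show Lc (T c) = L (T c) from rfl, this]
    have h3 : ‖Lc (T c)‖ ≤ ‖Lc‖ * ‖T c‖ := Lc.le_opNorm _
    calc |τ i| = |c ⟨i, hi⟩| := rfl
      _ ≤ ‖c‖ := h1
      _ = ‖Lc (T c)‖ := h2
      _ ≤ ‖Lc‖ * ‖T c‖ := h3
      _ = ‖Lc‖ * ‖∑ j, τ j • g j‖ := by rw [hTc]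
  · rw [hτ i hi]
    simp only [abs_zero]
    exact mul_nonneg (norm_nonneg _) (norm_nonneg _)

def coneOf (g : ι → E) : Set E :=
  {x | ∃ σ : ι → ℝ, (∀ i, 0 ≤ σ i) ∧ x = ∑ i, σ i • g i}

lemma coneOf_convex : Convex ℝ (coneOf g) := by
  intro x hx y hy p q hp hq hpq
  obtain ⟨σ, hσ0, hσ⟩ := hx
  obtain ⟨τ, hτ0, hτ⟩ := hy
  refine ⟨fun i => p * σ i + q * τ i,
    fun i => add_nonneg (mul_nonneg hp (hσ0 i)) (mul_nonneg hq (hτ0 i)), ?_⟩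
  rw [hσ, hτ]
  simp [add_smul, mul_smul, Finset.sum_add_distrib, Finset.smul_sum]

lemma boundedRep : ∃ C : ℝ, 0 < C ∧ ∀ x ∈ coneOf g, ∃ σ : ι → ℝ,
    (∀ i, 0 ≤ σ i) ∧ x = ∑ i, σ i • g i ∧ ∀ i, σ i ≤ C * ‖x‖ := by
  classical
  set B : Finset ι → ℝ := fun s =>
    if h : LinearIndependent ℝ (fun i : {x // x ∈ s} => g i) then
      (bound_of_linIndep g s h).choose else 0 with hB
  set C : ℝ := 1 + ∑ s : Finset ι, |B s| with hC
  have hCpos : 0 < C := by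
    have : (0:ℝ) ≤ ∑ s : Finset ι, |B s| := Finset.sum_nonneg fun s _ => abs_nonneg _
    linarith
  refine ⟨C, hCpos, ?_⟩
  rintro x ⟨σ, hσ0, hσ⟩
  obtain ⟨τ, hτ0, hτsum, hτli⟩ := carath g σ hσ0
  set s : Finset ι := Finset.univ.filter fun i => τ i ≠ 0 with hs
  have hmem : ∀ i, i ∈ s ↔ τ i ≠ 0 := fun i => by simp [hs]
  have hli : LinearIndependent ℝ (fun i : {x // x ∈ s} => g i) := by
    have := hτli.comp (fun i : {x // x ∈ s} => (⟨i.1, (hmem i.1).1 i.2⟩ : {i // τ i ≠ 0}))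
      (fun i j hij => by
        apply Subtype.ext
        have := congrArg Subtype.val hij
        simpa using this)
    exact this
  have hBspec := (bound_of_linIndep g s hli).choose_spec
  have hBs : B s = (bound_of_linIndep g s hli).choose := by
    show (if h : LinearIndependent ℝ (fun i : {x // x ∈ s} => g i) then
      (bound_of_linIndep g s h).choose else 0) = _
    rw [dif_pos hli]
  refine ⟨τ, hτ0, by rw [← hτsum] at hσ; exact hσ, ?_⟩
  intro i
  have h1 : |τ i| ≤ B s * ‖∑ j, τ j • g j‖ := by
    rw [hBs]
    exact hBspec.2 τ (fun i hi => by by_contra hc; exact hi ((hmem i).2 hc)) i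
  have hx : ‖∑ j, τ j • g j‖ = ‖x‖ := by rw [hτsum, ← hσ]
  have hBC : B s ≤ C := by
    have h2 : |B s| ≤ ∑ s : Finset ι, |B s| :=
      Finset.single_le_sum (fun t _ => abs_nonneg (B t)) (Finset.mem_univ s)
    calc B s ≤ |B s| := le_abs_self _
      _ ≤ ∑ s : Finset ι, |B s| := h2
      _ ≤ C := by rw [hC]; linarith
  calc τ i ≤ |τ i| := le_abs_self _
    _ ≤ B s * ‖x‖ := by rw [← hx]; exact h1
    _ ≤ C * ‖x‖ := mul_le_mul_of_nonneg_right hBC (norm_nonneg _)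

lemma coneOf_isClosed : IsClosed (coneOf g) := by
  classical
  obtain ⟨C, hCpos, hCspec⟩ := boundedRep g
  refine IsSeqClosed.isClosed ?_
  intro xs x hxs hx
  obtain ⟨M, hM⟩ : ∃ M : ℝ, ∀ k, ‖xs k‖ ≤ M := by
    obtain ⟨M, hM⟩ := (hx.norm).bddAbove_range
    exact ⟨M, fun k => hM ⟨k, rfl⟩⟩
  choose σ hσ0 hσsum hσbd using fun k => hCspec (xs k) (hxs k)
  have hσmem : ∀ k, σ k ∈ Set.pi Set.univ fun _ : ι => Icc (0:ℝ) (C * M) := by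
    intro k i _
    exact ⟨hσ0 k i, le_trans (hσbd k i)
      (mul_le_mul_of_nonneg_left (hM k) (le_of_lt hCpos))⟩
  have hcpt : IsCompact (Set.pi Set.univ fun _ : ι => Icc (0:ℝ) (C * M)) :=
    isCompact_univ_pi fun _ => isCompact_Icc
  obtain ⟨σl, hσlmem, φ, hφmono, hφtend⟩ := hcpt.tendsto_subseq hσmem
  have h1 : Tendsto (fun k => ∑ i, σ (φ k) i • g i) atTop (𝓝 (∑ i, σl i • g i)) := by
    refine tendsto_finset_sum _ fun i _ => ?_
    exact ((tendsto_pi_nhds.1 hφtend) i).smul tendsto_const_nhds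
  have h2 : Tendsto (fun k => xs (φ k)) atTop (𝓝 x) := hx.comp hφmono.tendsto_atTop
  have h3 : (fun k => xs (φ k)) = fun k => ∑ i, σ (φ k) i • g i := by
    funext k; exact hσsum (φ k)
  rw [h3] at h2
  exact ⟨σl, fun i => (hσlmem i (Set.mem_univ i)).1, tendsto_nhds_unique h2 h1⟩

lemma mem_coneOf_single (i : ι) : g i ∈ coneOf g := by
  classical
  refine ⟨fun j => if j = i then 1 else 0, fun j => by positivity, ?_⟩
  simp [ite_smul]

lemma farkas [CompleteSpace E] (v : E)
    (hv : ∀ z : E, (∀ i, ⟪g i, z⟫ ≤ 0) → ⟪v, z⟫ ≤ 0) : v ∈ coneOf g := by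
  classical
  by_contra hvc
  obtain ⟨f, u, hfu, huv⟩ :=
    geometric_hahn_banach_closed_point (coneOf_convex g) (coneOf_isClosed g) hvc
  have h0 : (0:E) ∈ coneOf g := ⟨fun _ => 0, fun _ => le_rfl, by simp⟩
  have hu0 : 0 < u := by have := hfu 0 h0; simpa using this
  have hscale : ∀ y ∈ coneOf g, ∀ t : ℝ, 0 ≤ t → t • y ∈ coneOf g := by
    rintro y ⟨σ, hσ0, hσ⟩ t ht
    exact ⟨fun i => t * σ i, fun i => mul_nonneg ht (hσ0 i), by
      rw [hσ]; simp [Finset.smul_sum, mul_smul]⟩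
  have hfneg : ∀ y ∈ coneOf g, f y ≤ 0 := by
    intro y hy
    by_contra hc
    push_neg at hc
    have ht : (0:ℝ) ≤ (u + 1) / f y := div_nonneg (by linarith) (le_of_lt hc)
    have := hfu _ (hscale y hy _ ht)
    rw [map_smul] at this
    simp only [smul_eq_mul] at this
    rw [div_mul_cancel₀ _ (ne_of_gt hc)] at this
    linarith
  set z : E := (InnerProductSpace.toDual ℝ E).symm f with hz
  have hzf : ∀ w : E, ⟪z, w⟫ = f w := fun w => InnerProductSpace.toDual_symm_apply
  have hgz : ∀ i, ⟪g i, z⟫ ≤ 0 := by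
    intro i
    rw [real_inner_comm, hzf]
    exact hfneg _ (mem_coneOf_single g i)
  have := hv z hgz
  rw [real_inner_comm, hzf] at this
  linarith

lemma farkas_bounded [CompleteSpace E] : ∃ C : ℝ, 0 < C ∧ ∀ v : E,
    (∀ z : E, (∀ i, ⟪g i, z⟫ ≤ 0) → ⟪v, z⟫ ≤ 0) →
    ∃ σ : ι → ℝ, (∀ i, 0 ≤ σ i) ∧ v = ∑ i, σ i • g i ∧ ∀ i, σ i ≤ C * ‖v‖ := by
  obtain ⟨C, hC, hspec⟩ := boundedRep g
  exact ⟨C, hC, fun v hv => hspec v (farkas g v hv)⟩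

/-- From a point of a polyhedron one can move a positive amount in any direction
that respects the active constraints. -/
lemma exists_pos_step {ι : Type*} [Fintype ι] (c : ι → E) (β : ι → ℝ) (x z : E)
    (hx : ∀ i, ⟪c i, x⟫ ≤ β i) (hz : ∀ i, ⟪c i, x⟫ = β i → ⟪c i, z⟫ ≤ 0) :
    ∃ t : ℝ, 0 < t ∧ ∀ i, ⟪c i, x + t • z⟫ ≤ β i := by
  have h : ∀ᶠ t : ℝ in 𝓝[>] 0, ∀ i, ⟪c i, x + t • z⟫ ≤ β i := by
    rw [eventually_all]
    intro i
    rcases eq_or_lt_of_le (hx i) with he | hlt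
    · filter_upwards [self_mem_nhdsWithin] with t ht
      rw [inner_add_right, real_inner_smul_right]
      have h1 := hz i he
      have h2 : (0:ℝ) < t := ht
      nlinarith
    · have hcont : Tendsto (fun t : ℝ => ⟪c i, x + t • z⟫) (𝓝 0) (𝓝 ⟪c i, x + (0:ℝ) • z⟫) := by
        apply Continuous.tendsto
        exact Continuous.inner continuous_const
          (continuous_const.add (continuous_id.smul continuous_const))
      rw [zero_smul, add_zero] at hcont
      have := (hcont.eventually_lt_const hlt).mono fun t ht => le_of_lt ht
      exact this.filter_mono nhdsWithin_le_nhds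
  obtain ⟨t, ht1, ht2⟩ := (h.and self_mem_nhdsWithin).exists
  exact ⟨t, ht2, ht1⟩

end Cone

end FarkasAux

/-- Polyhedral reduction. -/
theorem statement16 {n : ℕ} (Q : Set (Euc n)) (hQ : IsPolyhedron Q)
    (xb : Euc n) (hxb : xb ∈ Q) (vb : Euc n) (hvb : vb ∈ convNormalCone Q xb)
    (K : Set (Euc n)) (hK : K = convTangentCone Q xb ∩ {w | ⟪vb, w⟫ = 0}) :
    ∃ W ∈ 𝓝 ((0 : Euc n), (0 : Euc n)), ∀ w u : Euc n, (w, u) ∈ W →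
      ((xb + w ∈ Q ∧ vb + u ∈ convNormalCone Q (xb + w)) ↔
        (w ∈ K ∧ u ∈ convNormalCone K w)) := by
  classical
  obtain ⟨k, a, b, hQeq⟩ := hQ
  have hxbm : ∀ i, ⟪a i, xb⟫ ≤ b i := by rw [hQeq] at hxb; exact hxb
  set Iset : Finset (Fin k) := Finset.univ.filter (fun i => ⟪a i, xb⟫ = b i) with hIset
  have hImem : ∀ i, i ∈ Iset ↔ ⟪a i, xb⟫ = b i := fun i => by simp [hIset]
  have hIc : ∀ i, i ∉ Iset → ⟪a i, xb⟫ < b i := fun i hi =>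
    lt_of_le_of_ne (hxbm i) (fun h => hi ((hImem i).2 h))
  -- description of the critical cone
  have hKdesc : K = {z : Euc n | (∀ i ∈ Iset, ⟪a i, z⟫ ≤ 0) ∧ ⟪vb, z⟫ = 0} := by
    rw [hK]
    ext z
    simp only [Set.mem_inter_iff, Set.mem_setOf_eq]
    constructor
    · rintro ⟨hz1, hz2⟩
      refine ⟨fun i hi => ?_, hz2⟩
      have hcl : convTangentCone Q xb ⊆ {z : Euc n | ⟪a i, z⟫ ≤ 0} := by
        apply closure_minimal
        · rintro w ⟨l, hl, y, hy, rfl⟩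
          show ⟪a i, l • (y - xb)⟫ ≤ 0
          rw [real_inner_smul_right]
          have hyb : ⟪a i, y⟫ ≤ b i := by rw [hQeq] at hy; exact hy i
          have hbi := (hImem i).1 hi
          have hiy : ⟪a i, y - xb⟫ ≤ 0 := by rw [inner_sub_right]; linarith
          exact mul_nonpos_of_nonneg_of_nonpos hl hiy
        · exact isClosed_le (Continuous.inner continuous_const continuous_id) continuous_const
      exact hcl hz1
    · rintro ⟨hz1, hz2⟩
      refine ⟨?_, hz2⟩
      obtain ⟨t, htpos, ht⟩ := exists_pos_step a b xb z hxbm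
        (fun i hi => hz1 i ((hImem i).2 hi))
      apply subset_closure
      refine ⟨t⁻¹, le_of_lt (inv_pos.2 htpos), xb + t • z, by rw [hQeq]; exact ht, ?_⟩
      rw [add_sub_cancel_left, smul_smul, inv_mul_cancel₀ (ne_of_gt htpos), one_smul]
  -- the slack radius δ
  obtain ⟨δ, hδpos, hδ⟩ : ∃ δ > (0:ℝ), ∀ w : Euc n, ‖w‖ < δ →
      ∀ i, i ∉ Iset → ⟪a i, xb + w⟫ < b i := by
    have h : ∀ᶠ w : Euc n in 𝓝 0, ∀ i, i ∉ Iset → ⟪a i, xb + w⟫ < b i := by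
      rw [eventually_all]
      intro i
      by_cases hi : i ∈ Iset
      · filter_upwards with w hc
        exact (hc hi).elim
      · have hcont : Tendsto (fun w : Euc n => ⟪a i, xb + w⟫) (𝓝 0)
            (𝓝 ⟪a i, xb + (0:Euc n)⟫) := by
          apply Continuous.tendsto
          exact Continuous.inner continuous_const (continuous_const.add continuous_id)
        rw [add_zero] at hcont
        exact (hcont.eventually_lt_const (hIc i hi)).mono fun w hw _ => hw
    obtain ⟨δ, hδpos, hδ⟩ := Metric.eventually_nhds_iff_ball.1 h
    exact ⟨δ, hδpos, fun w hw => hδ w (by rwa [mem_ball, dist_zero_right])⟩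
  -- polar cones of the active-constraint tangent cones
  set P : Finset (Fin k) → Set (Euc n) := fun J =>
    {v : Euc n | ∀ z : Euc n, (∀ i ∈ J, ⟪a i, z⟫ ≤ 0) → ⟪v, z⟫ ≤ 0} with hP
  have hPclosed : ∀ J, IsClosed (P J) := by
    intro J
    have hform : P J = ⋂ z ∈ {z : Euc n | ∀ i ∈ J, ⟪a i, z⟫ ≤ 0},
        {v : Euc n | ⟪v, z⟫ ≤ 0} := by
      ext v
      simp only [hP, Set.mem_setOf_eq, Set.mem_iInter]
    rw [hform]
    exact isClosed_biInter fun z _ =>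
      isClosed_le (Continuous.inner continuous_id continuous_const) continuous_const
  -- the radius coming from the finitely many polar cones not containing vb
  set bad : Set (Euc n) := ⋃ J ∈ {J : Finset (Fin k) | vb ∉ P J}, P J with hbad
  have hbadclosed : IsClosed bad :=
    Set.Finite.isClosed_biUnion (Set.toFinite _) (fun J _ => hPclosed J)
  have hvbbad : vb ∉ bad := by
    intro hmem
    rw [hbad, Set.mem_iUnion₂] at hmem
    obtain ⟨J, hJ, h2⟩ := hmem
    exact hJ h2
  obtain ⟨ε₁, hε₁pos, hε₁⟩ : ∃ ε > (0:ℝ), ball vb ε ⊆ badᶜ :=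
    Metric.mem_nhds_iff.1 (hbadclosed.isOpen_compl.mem_nhds hvbbad)
  -- the families for the bounded Farkas lemma
  set gfam : Finset (Fin k) → (Fin k ⊕ Bool) → Euc n := fun J =>
    Sum.elim (fun i => if i ∈ J then a i else 0) (fun s => if s then vb else -vb) with hgfam
  have hgfaml : ∀ (J : Finset (Fin k)) i, gfam J (Sum.inl i) = if i ∈ J then a i else 0 :=
    fun J i => rfl
  have hgfamt : ∀ J : Finset (Fin k), gfam J (Sum.inr true) = vb := fun J => rfl
  have hgfamf : ∀ J : Finset (Fin k), gfam J (Sum.inr false) = -vb := fun J => rfl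
  choose Cf hCfpos hCfspec using fun J : Finset (Fin k) => farkas_bounded (gfam J)
  set C : ℝ := (Finset.univ : Finset (Finset (Fin k))).sup' ⟨∅, Finset.mem_univ ∅⟩ Cf with hC
  have hCle : ∀ J, Cf J ≤ C := fun J => Finset.le_sup' Cf (Finset.mem_univ J)
  have hCpos : 0 < C := lt_of_lt_of_le (hCfpos ∅) (hCle ∅)
  set ε : ℝ := min ε₁ (C + 1)⁻¹ with hε
  have hεpos : 0 < ε := lt_min hε₁pos (inv_pos.2 (by linarith))
  -- the neighbourhood
  refine ⟨ball (0 : Euc n) δ ×ˢ ball (0 : Euc n) ε,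
    prod_mem_nhds (ball_mem_nhds _ hδpos) (ball_mem_nhds _ hεpos), ?_⟩
  intro w u hwu
  rw [Set.mem_prod, mem_ball, mem_ball, dist_zero_right, dist_zero_right] at hwu
  obtain ⟨hw, hu⟩ := hwu
  have hslack : ∀ i, i ∉ Iset → ⟪a i, xb + w⟫ < b i := fun i hi => hδ w hw i hi
  set J : Finset (Fin k) := Finset.univ.filter (fun i => ⟪a i, xb + w⟫ = b i) with hJ
  have hJmem : ∀ i, i ∈ J ↔ ⟪a i, xb + w⟫ = b i := fun i => by simp [hJ]
  have hJI : ∀ i ∈ J, i ∈ Iset := fun i hi => by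
    by_contra hc
    exact absurd ((hJmem i).1 hi) (ne_of_lt (hslack i hc))
  have hwJ : ∀ i ∈ J, ⟪a i, w⟫ = 0 := by
    intro i hi
    have h1' := (hJmem i).1 hi
    have h2' := (hImem i).1 (hJI i hi)
    rw [inner_add_right] at h1'
    linarith
  constructor
  · -- forward direction
    rintro ⟨h1, h2⟩
    have hxQ : ∀ i, ⟪a i, xb + w⟫ ≤ b i := by rw [hQeq] at h1; exact h1
    have hwI : ∀ i ∈ Iset, ⟪a i, w⟫ ≤ 0 := by
      intro i hi
      have hx1 := hxQ i
      rw [inner_add_right] at hx1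
      have hx2 := (hImem i).1 hi
      linarith
    have hstep : ∀ z : Euc n, (∀ i ∈ J, ⟪a i, z⟫ ≤ 0) → ⟪vb + u, z⟫ ≤ 0 := by
      intro z hz
      obtain ⟨t, htpos, ht⟩ := exists_pos_step a b (xb + w) z hxQ
        (fun i hie => hz i ((hJmem i).2 hie))
      have h3 := h2 ((xb + w) + t • z) (by rw [hQeq]; exact ht)
      rw [add_sub_cancel_left, real_inner_smul_right] at h3
      by_contra hc
      push_neg at hc
      nlinarith
    have hvP : (vb + u) ∈ P J := hstep
    have hvbP : vb ∈ P J := by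
      by_contra hc
      have hsub : P J ⊆ bad := by
        rw [hbad]
        exact Set.subset_biUnion_of_mem (show J ∈ {J : Finset (Fin k) | vb ∉ P J} from hc)
      have hvball : vb + u ∈ ball vb ε₁ := by
        rw [mem_ball, dist_eq_norm, add_sub_cancel_left]
        exact lt_of_lt_of_le hu (min_le_left _ _)
      exact (hε₁ hvball) (hsub hvP)
    have hvbw : ⟪vb, w⟫ = 0 := by
      have hle : ⟪vb, w⟫ ≤ 0 := by
        have h4 := hvb (xb + w) h1
        rwa [add_sub_cancel_left] at h4
      have hge : ⟪vb, -w⟫ ≤ 0 :=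
        hvbP (-w) (fun i hi => by rw [inner_neg_right, hwJ i hi, neg_zero])
      rw [inner_neg_right] at hge
      linarith
    constructor
    · rw [hKdesc]; exact ⟨hwI, hvbw⟩
    · intro y hy
      rw [hKdesc] at hy
      obtain ⟨hy1, hy2⟩ := hy
      have hvyw : ⟪vb + u, y - w⟫ ≤ 0 := by
        apply hstep
        intro i hi
        rw [inner_sub_right, hwJ i hi, sub_zero]
        exact hy1 i (hJI i hi)
      have hvb0 : ⟪vb, y - w⟫ = 0 := by rw [inner_sub_right, hy2, hvbw, sub_zero]
      rw [inner_add_left] at hvyw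
      linarith
  · -- backward direction
    rintro ⟨h1, h2⟩
    rw [hKdesc] at h1
    obtain ⟨hwI, hvbw⟩ := h1
    have hxQ : ∀ i, ⟪a i, xb + w⟫ ≤ b i := by
      intro i
      by_cases hi : i ∈ Iset
      · rw [inner_add_right]
        have := hwI i hi
        have := (hImem i).1 hi
        linarith
      · exact le_of_lt (hslack i hi)
    have hxq : xb + w ∈ Q := by rw [hQeq]; exact hxQ
    refine ⟨hxq, ?_⟩
    have hIJ : ∀ i ∈ Iset, ⟪a i, w⟫ = 0 → i ∈ J := by
      intro i hi h0
      refine (hJmem i).2 ?_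
      rw [inner_add_right, h0, add_zero]
      exact (hImem i).1 hi
    -- Farkas representation of vb
    set cI : Fin k → Euc n := fun i => if i ∈ Iset then a i else 0 with hcI
    have hcIe : ∀ i, cI i = if i ∈ Iset then a i else 0 := fun i => rfl
    have hvbFar : ∀ z : Euc n, (∀ i, ⟪cI i, z⟫ ≤ 0) → ⟪vb, z⟫ ≤ 0 := by
      intro z hz
      have hz' : ∀ i ∈ Iset, ⟪a i, z⟫ ≤ 0 := fun i hi => by
        have := hz i
        simp only [hcI] at this
        rwa [if_pos hi] at this
      obtain ⟨t, htpos, ht⟩ := exists_pos_step a b xb z hxbm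
        (fun i hie => hz' i ((hImem i).2 hie))
      have h3 := hvb (xb + t • z) (by rw [hQeq]; exact ht)
      rw [add_sub_cancel_left, real_inner_smul_right] at h3
      by_contra hc
      push_neg at hc
      nlinarith
    obtain ⟨lam, hlam0, hlamsum⟩ := farkas cI vb hvbFar
    set lam' : Fin k → ℝ := fun i => if i ∈ Iset then lam i else 0 with hlam'
    have hlam'e : ∀ i, lam' i = if i ∈ Iset then lam i else 0 := fun i => rfl
    have hlam'0 : ∀ i, 0 ≤ lam' i := fun i => by
      rw [hlam'e i]
      by_cases hi : i ∈ Iset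
      · rw [if_pos hi]; exact hlam0 i
      · rw [if_neg hi]
    have hvbsum : vb = ∑ i, lam' i • a i := by
      rw [hlamsum]
      refine Finset.sum_congr rfl fun i _ => ?_
      by_cases hi : i ∈ Iset
      · rw [hcIe i, hlam'e i, if_pos hi, if_pos hi]
      · rw [hcIe i, hlam'e i, if_neg hi, if_neg hi, smul_zero, zero_smul]
    have hsupp : ∀ i, lam' i ≠ 0 → ⟪a i, w⟫ = 0 ∧ i ∈ Iset := by
      intro i hne
      have hiI : i ∈ Iset := by
        by_contra hc
        exact hne (by rw [hlam'e i, if_neg hc])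
      refine ⟨?_, hiI⟩
      have hzero : ∑ j, lam' j * ⟪a j, w⟫ = 0 := by
        have hexp : ⟪vb, w⟫ = ∑ j, lam' j * ⟪a j, w⟫ := by
          rw [hvbsum, sum_inner]
          exact Finset.sum_congr rfl fun j _ => real_inner_smul_left _ _ _
        rw [← hexp, hvbw]
      have hterms : ∀ j ∈ Finset.univ, lam' j * ⟪a j, w⟫ ≤ (0:ℝ) := by
        intro j _
        by_cases hj : j ∈ Iset
        · exact mul_nonpos_of_nonneg_of_nonpos (hlam'0 j) (hwI j hj)
        · rw [hlam'e j, if_neg hj, zero_mul]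
      have h5 := (Finset.sum_eq_zero_iff_of_nonpos hterms).1 hzero i (Finset.mem_univ i)
      rcases mul_eq_zero.1 h5 with h | h
      · exact absurd h hne
      · exact h
    -- bounded Farkas representation of u
    have huFar : ∀ z : Euc n, (∀ t, ⟪gfam J t, z⟫ ≤ 0) → ⟪u, z⟫ ≤ 0 := by
      intro z hz
      have hzJ : ∀ i ∈ J, ⟪a i, z⟫ ≤ 0 := fun i hi => by
        have := hz (Sum.inl i)
        rwa [hgfaml J i, if_pos hi] at this
      have hzvb : ⟪vb, z⟫ = 0 := by
        have ht1 := hz (Sum.inr true)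
        have ht2 := hz (Sum.inr false)
        rw [hgfamt J] at ht1
        rw [hgfamf J, inner_neg_left] at ht2
        linarith
      have hxK : ∀ t, ⟪gfam Iset t, w⟫ ≤ 0 := by
        rintro (i | s)
        · rw [hgfaml Iset i]
          by_cases hi : i ∈ Iset
          · rw [if_pos hi]; exact hwI i hi
          · rw [if_neg hi, inner_zero_left]
        · cases s
          · rw [hgfamf Iset, inner_neg_left, hvbw, neg_zero]
          · rw [hgfamt Iset, hvbw]
      have hzK : ∀ t, ⟪gfam Iset t, w⟫ = 0 → ⟪gfam Iset t, z⟫ ≤ 0 := by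
        rintro (i | s) h0
        · rw [hgfaml Iset i] at h0 ⊢
          by_cases hi : i ∈ Iset
          · rw [if_pos hi] at h0 ⊢
            exact hzJ i (hIJ i hi h0)
          · rw [if_neg hi, inner_zero_left]
        · cases s
          · rw [hgfamf Iset, inner_neg_left, hzvb, neg_zero]
          · rw [hgfamt Iset, hzvb]
      obtain ⟨t, htpos, ht⟩ := exists_pos_step (gfam Iset) (fun _ => 0) w z hxK
        (fun i hie => hzK i hie)
      have hmemK : w + t • z ∈ K := by
        rw [hKdesc]
        constructor
        · intro i hi
          have := ht (Sum.inl i)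
          rwa [hgfaml Iset i, if_pos hi] at this
        · have ht1 := ht (Sum.inr true)
          have ht2 := ht (Sum.inr false)
          rw [hgfamt Iset] at ht1
          rw [hgfamf Iset, inner_neg_left] at ht2
          linarith
      have h6 := h2 (w + t • z) hmemK
      rw [add_sub_cancel_left, real_inner_smul_right] at h6
      by_contra hc
      push_neg at hc
      nlinarith
    obtain ⟨σ, hσ0, hσsum, hσbd⟩ := hCfspec J u huFar
    -- the coefficient in front of vb stays positive
    set sc : ℝ := 1 + σ (Sum.inr true) - σ (Sum.inr false) with hsc
    have hsc0 : 0 ≤ sc := by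
      have hbd := hσbd (Sum.inr false)
      have hle1 : Cf J * ‖u‖ ≤ C * ‖u‖ :=
        mul_le_mul_of_nonneg_right (hCle J) (norm_nonneg u)
      have hu2 : ‖u‖ ≤ (C + 1)⁻¹ := le_of_lt (lt_of_lt_of_le hu (min_le_right _ _))
      have hle2 : C * ‖u‖ ≤ C * (C + 1)⁻¹ :=
        mul_le_mul_of_nonneg_left hu2 (le_of_lt hCpos)
      have hlt1 : C * (C + 1)⁻¹ < 1 := by
        rw [← div_eq_mul_inv]
        exact (div_lt_one (by linarith)).2 (by linarith)
      rw [hsc]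
      linarith [hσ0 (Sum.inr true)]
    set ρ : Fin k → ℝ := fun i =>
      (if i ∈ J then σ (Sum.inl i) else 0) + sc * lam' i with hρ
    have hρ0 : ∀ i, 0 ≤ ρ i := by
      intro i
      show 0 ≤ (if i ∈ J then σ (Sum.inl i) else 0) + sc * lam' i
      refine add_nonneg ?_ (mul_nonneg hsc0 (hlam'0 i))
      by_cases hi : i ∈ J
      · rw [if_pos hi]; exact hσ0 _
      · rw [if_neg hi]
    have hrep : vb + u = ∑ i, ρ i • a i := by
      have hu' : u = (∑ i, (if i ∈ J then σ (Sum.inl i) else 0) • a i) +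
          (σ (Sum.inr true) - σ (Sum.inr false)) • vb := by
        rw [hσsum, Fintype.sum_sum_type]
        congr 1
        · refine Finset.sum_congr rfl fun i _ => ?_
          by_cases hi : i ∈ J
          · rw [hgfaml J i, if_pos hi, if_pos hi]
          · rw [hgfaml J i, if_neg hi, if_neg hi, smul_zero, zero_smul]
        · rw [Fintype.sum_bool, hgfamt J, hgfamf J, sub_smul, smul_neg]
          abel
      have hrhs : ∑ i, ρ i • a i = (∑ i, (if i ∈ J then σ (Sum.inl i) else 0) • a i) +
          sc • ∑ i, lam' i • a i := by
        rw [Finset.smul_sum, ← Finset.sum_add_distrib]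
        refine Finset.sum_congr rfl fun i _ => ?_
        show ((if i ∈ J then σ (Sum.inl i) else 0) + sc * lam' i) • a i = _
        rw [add_smul, smul_smul]
      rw [hu', hrhs, hsc, ← hvbsum]
      module
    have hsuppJ : ∀ i, ρ i ≠ 0 → ⟪a i, xb + w⟫ = b i := by
      intro i hne
      by_cases hi : i ∈ J
      · exact (hJmem i).1 hi
      · have hlne : lam' i ≠ 0 := by
          intro hz0
          apply hne
          show (if i ∈ J then σ (Sum.inl i) else 0) + sc * lam' i = 0
          rw [if_neg hi, hz0, mul_zero, add_zero]
        obtain ⟨hw0, hiI⟩ := hsupp i hlne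
        exact (hJmem i).1 (hIJ i hiI hw0)
    intro y hy
    have hyq : ∀ i, ⟪a i, y⟫ ≤ b i := by rw [hQeq] at hy; exact hy
    have hexp2 : ⟪vb + u, y - (xb + w)⟫ = ∑ i, ρ i * ⟪a i, y - (xb + w)⟫ := by
      rw [hrep, sum_inner]
      exact Finset.sum_congr rfl fun i _ => real_inner_smul_left _ _ _
    rw [hexp2]
    apply Finset.sum_nonpos
    intro i _
    by_cases hne : ρ i = 0
    · rw [hne, zero_mul]
    · have hact := hsuppJ i hne
      have hterm : ⟪a i, y - (xb + w)⟫ ≤ 0 := by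
        rw [inner_sub_right, hact]
        linarith [hyq i]
      exact mul_nonpos_of_nonneg_of_nonpos (hρ0 i) hterm
end
end

section
/- (Restricted optimality) Let Q ⊂ ℝⁿ be a closed set and let M ⊂ Q be identifiable at x̄ for a proximal normal v̄ ∈ N^P_Q(x̄). Then x̄ is a local maximizer of the linear function x ↦ ⟨v̄, x⟩ on M if and only if x̄ is a local maximizer of ⟨v̄, ·⟩ on Q; the same equivalence holds with 'local maximizer' replaced by 'strict local maximizer'. -/
open Filter Topology Metric Set
open scoped RealInnerProductSpace

noncomputable section

section AuxProof

lemma frechet_mem_limiting {n : ℕ} {Q : Set (Euc n)} {y v : Euc n}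
    (h : v ∈ frechetNormalCone Q y) : v ∈ limitingNormalCone Q y :=
  ⟨fun _ => y, fun _ => v, fun _ => h, tendsto_const_nhds, tendsto_const_nhds⟩

/-- The proximal normal inequality. -/
lemma prox_ineq {n : ℕ} {Q : Set (Euc n)} {xb vb : Euc n}
    (hvb : vb ∈ proxNormalCone Q xb) :
    ∃ r > (0:ℝ), ∀ y ∈ Q, ⟪vb, y - xb⟫ ≤ r / 2 * ‖y - xb‖ ^ 2 := by
  obtain ⟨hxbQ, r, hr, hP⟩ := hvb
  refine ⟨r, hr, fun y hy => ?_⟩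
  have h := hP y hy
  have h1 : dist (xb + r⁻¹ • vb) xb = ‖r⁻¹ • vb‖ := by
    rw [dist_eq_norm]; congr 1; abel
  have h2 : dist (xb + r⁻¹ • vb) y = ‖r⁻¹ • vb - (y - xb)‖ := by
    rw [dist_eq_norm]; congr 1; abel
  rw [h1, h2] at h
  have hsq : ‖r⁻¹ • vb‖ ^ 2 ≤ ‖r⁻¹ • vb - (y - xb)‖ ^ 2 := by
    have := norm_nonneg (r⁻¹ • vb)
    nlinarith [norm_nonneg (r⁻¹ • vb - (y - xb))]
  rw [norm_sub_sq_real] at hsq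
  have hin : ⟪r⁻¹ • vb, y - xb⟫ = r⁻¹ * ⟪vb, y - xb⟫ := real_inner_smul_left _ _ _
  rw [hin] at hsq
  have hrpos : 0 < r⁻¹ := inv_pos.mpr hr
  have h3 : 2 * (r⁻¹ * ⟪vb, y - xb⟫) ≤ ‖y - xb‖ ^ 2 := by nlinarith
  have h4 : r * (2 * (r⁻¹ * ⟪vb, y - xb⟫)) ≤ r * ‖y - xb‖ ^ 2 :=
    mul_le_mul_of_nonneg_left h3 hr.le
  have h5 : r * (2 * (r⁻¹ * ⟪vb, y - xb⟫)) = 2 * ⟪vb, y - xb⟫ := by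
    field_simp
  rw [h5] at h4; linarith

set_option maxHeartbeats 4000000 in
/-- Key lemma: near `xb`, any point of `Q` with value at least `⟪vb, xb⟫`
gives rise to a point of `M` with at least that value. -/
lemma key_lemma {n : ℕ} {Q : Set (Euc n)} (hQ : IsClosed Q)
    {M : Set (Euc n)} {xb vb : Euc n} (hvb : vb ∈ proxNormalCone Q xb)
    (hid : IdentifiableIn Q M xb vb) {ε : ℝ} (hε : 0 < ε) :
    ∃ δ1 > (0:ℝ), ∀ x ∈ Q, dist x xb < δ1 → ⟪vb, xb⟫ ≤ ⟪vb, x⟫ →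
      ∃ y ∈ M, dist y xb < ε ∧ ⟪vb, x⟫ ≤ ⟪vb, y⟫ ∧ (x ≠ xb → y ≠ xb) := by
  obtain ⟨r, hr, hprox⟩ := prox_ineq hvb
  obtain ⟨W, hW, hWid⟩ := hid
  obtain ⟨ρ, hρ, hball⟩ := Metric.mem_nhds_iff.mp hW
  set m := min ε ρ with hm
  have hmpos : 0 < m := lt_min hε hρ
  set δ0 : ℝ := m / 2 with hδ0
  set δ1 : ℝ := m / (8 * (1 + r)) with hδ1
  have h1r : (0:ℝ) < 1 + r := by linarith
  have hδ1pos : 0 < δ1 := by positivity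
  have hδ0pos : 0 < δ0 := by positivity
  refine ⟨δ1, hδ1pos, fun x hxQ hxd hxge => ?_⟩
  -- Maximize the penalized linear function over a compact set.
  set S : Set (Euc n) := Q ∩ closedBall xb δ0 with hS
  have hScomp : IsCompact S := (isCompact_closedBall xb δ0).inter_left hQ
  have hδ1le : δ1 ≤ δ0 := by
    rw [hδ1, hδ0]
    apply div_le_div_of_nonneg_left hmpos.le (by norm_num) (by nlinarith)
  have hxS : x ∈ S := ⟨hxQ, mem_closedBall.mpr (by linarith)⟩
  have hSne : S.Nonempty := ⟨x, hxS⟩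
  set f : Euc n → ℝ := fun z => ⟪vb, z⟫ - r * ‖z - x‖ ^ 2 with hf
  have hcont : ContinuousOn f S := by
    apply Continuous.continuousOn
    exact (continuous_const.inner continuous_id').sub
      (continuous_const.mul (((continuous_id'.sub continuous_const).norm).pow 2))
  obtain ⟨y, hyS, hymax⟩ := hScomp.exists_isMaxOn hSne hcont
  have hymax' : ∀ z ∈ S, f z ≤ f y := fun z hz => hymax hz
  have hyQ : y ∈ Q := hyS.1
  -- basic inequality from maximality at x
  have hfx : f x ≤ f y := hymax' x hxS
  have hfx' : r * ‖y - x‖ ^ 2 ≤ ⟪vb, y - x⟫ := by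
    have : ⟪vb, x⟫ - r * ‖x - x‖ ^ 2 ≤ ⟪vb, y⟫ - r * ‖y - x‖ ^ 2 := hfx
    simp only [sub_self, norm_zero] at this
    rw [inner_sub_right]; nlinarith
  -- distance estimates
  set a : ℝ := ‖y - x‖ with ha
  set b : ℝ := dist x xb with hb
  have hbnn : 0 ≤ b := dist_nonneg
  have hann : 0 ≤ a := norm_nonneg _
  have hsplit : ⟪vb, y - x⟫ = ⟪vb, y - xb⟫ - ⟪vb, x - xb⟫ := by
    rw [← inner_sub_right]; congr 1; abel
  have hxge' : 0 ≤ ⟪vb, x - xb⟫ := by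
    rw [inner_sub_right]; linarith
  have hyxb : ‖y - xb‖ ≤ a + b := by
    have : y - xb = (y - x) + (x - xb) := by abel
    rw [this, hb, dist_eq_norm]
    exact norm_add_le _ _
  have hq2 : r * a ^ 2 ≤ r / 2 * (a + b) ^ 2 := by
    have h5 := hprox y hyQ
    have h6 : ‖y - xb‖ ^ 2 ≤ (a + b) ^ 2 := by nlinarith [norm_nonneg (y - xb)]
    nlinarith
  have hq2' : r * a ^ 2 ≤ r * ((a + b) ^ 2 / 2) := by linarith [hq2]
  have hq3 : a ^ 2 ≤ (a + b) ^ 2 / 2 := le_of_mul_le_mul_left hq2' hr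
  have hab : a ≤ 3 * b := by
    nlinarith [hq3, hann, hbnn, mul_nonneg hann hbnn, sq_nonneg a, sq_nonneg b,
      sq_nonneg (a - b), sq_nonneg (a + b), sq_nonneg (a - 3 * b)]
  have hdyxb : dist y xb ≤ 4 * b := by
    calc dist y xb = ‖y - xb‖ := dist_eq_norm _ _
    _ ≤ a + b := hyxb
    _ ≤ 4 * b := by linarith
  have hbm : 4 * b < m / (2 * (1 + r)) := by
    rw [hδ1] at hxd
    have : 4 * b < 4 * (m / (8 * (1 + r))) := by linarith
    calc 4 * b < 4 * (m / (8 * (1 + r))) := this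
    _ = m / (2 * (1 + r)) := by field_simp; ring
  have hmhalf : m / (2 * (1 + r)) ≤ m / 2 := by
    apply div_le_div_of_nonneg_left hmpos.le (by norm_num) (by nlinarith)
  have hdym : dist y xb < m / (2 * (1 + r)) := lt_of_le_of_lt hdyxb hbm
  have hdy0 : dist y xb < δ0 := by
    rw [hδ0]; exact lt_of_lt_of_le hdym hmhalf
  have hdym' : dist y xb < m := lt_of_lt_of_le hdy0 (by rw [hδ0]; linarith)
  -- the Fréchet normal vector
  set v : Euc n := vb - (2 * r) • (y - x) with hv
  have hdvvb : dist v vb ≤ 2 * r * a := by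
    rw [dist_eq_norm]
    have hvv : v - vb = -((2 * r) • (y - x)) := by rw [hv]; exact sub_sub_cancel_left _ _
    rw [hvv, norm_neg, norm_smul, ← ha]
    simp only [Real.norm_eq_abs, abs_of_pos (by positivity : (0:ℝ) < 2 * r), le_refl]
  have hdvvb' : dist v vb < ρ := by
    have h7 : 2 * r * a ≤ 6 * r * b := by nlinarith
    have h8 : 6 * r * b < 6 * r * δ1 + m / 8 := by
      rcases lt_or_ge 0 r with hr' | hr'
      · have := mul_lt_mul_of_pos_left hxd (by positivity : (0:ℝ) < 6 * r)
        linarith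
      · nlinarith
    have h9 : 6 * r * δ1 ≤ 6 * r / (8 * (1 + r)) * m := by
      rw [hδ1]; rw [div_mul_eq_mul_div, mul_div_assoc]
    have h10 : 6 * r / (8 * (1 + r)) * m ≤ 6 / 8 * m := by
      have : 6 * r / (8 * (1 + r)) ≤ 6 / 8 := by
        rw [div_le_div_iff₀ (by positivity) (by norm_num)]
        nlinarith
      exact mul_le_mul_of_nonneg_right this hmpos.le
    have hmρ : m ≤ ρ := min_le_right _ _
    calc dist v vb ≤ 2 * r * a := hdvvb
      _ < m := by linarith
      _ ≤ ρ := hmρ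
  -- Fréchet normal cone membership
  have hvF : v ∈ frechetNormalCone Q y := by
    refine ⟨hyQ, fun ε' hε' => ?_⟩
    refine ⟨min (ε' / r) (δ0 - dist y xb), lt_min (by positivity) (by linarith), fun z hzQ hzd => ?_⟩
    have hzball : z ∈ closedBall xb δ0 := by
      rw [mem_closedBall]
      have := dist_triangle z y xb
      have h1 := lt_of_lt_of_le hzd (min_le_right _ _)
      linarith
    have hfz : f z ≤ f y := hymax' z ⟨hzQ, hzball⟩
    have hexp : ‖z - x‖ ^ 2 = ‖z - y‖ ^ 2 + 2 * ⟪z - y, y - x⟫ + ‖y - x‖ ^ 2 := by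
      have h := norm_add_sq_real (z - y) (y - x)
      rw [sub_add_sub_cancel] at h
      exact h
    have hvin : ⟪v, z - y⟫ = ⟪vb, z - y⟫ - 2 * r * ⟪y - x, z - y⟫ := by
      rw [hv, inner_sub_left, real_inner_smul_left]
    have hcomm : ⟪y - x, z - y⟫ = ⟪z - y, y - x⟫ := real_inner_comm _ _
    have hvbzy : ⟪vb, z - y⟫ = ⟪vb, z⟫ - ⟪vb, y⟫ := inner_sub_right _ _ _
    have hfz' : ⟪vb, z⟫ - ⟪vb, y⟫ ≤ r * (‖z - y‖ ^ 2 + 2 * ⟪z - y, y - x⟫) := by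
      have : ⟪vb, z⟫ - r * ‖z - x‖ ^ 2 ≤ ⟪vb, y⟫ - r * ‖y - x‖ ^ 2 := hfz
      rw [hexp] at this; nlinarith
    have hstep : ⟪v, z - y⟫ ≤ r * ‖z - y‖ ^ 2 := by
      rw [hvin, hvbzy, hcomm]; nlinarith
    have hzy : ‖z - y‖ < ε' / r := by
      rw [← dist_eq_norm]; exact lt_of_lt_of_le hzd (min_le_left _ _)
    have : r * ‖z - y‖ ^ 2 ≤ ε' * ‖z - y‖ := by
      have hn : 0 ≤ ‖z - y‖ := norm_nonneg _
      have : r * ‖z - y‖ ≤ ε' := by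
        rw [← le_div_iff₀' hr] ; exact hzy.le
      nlinarith
    linarith
  -- identification: y ∈ M
  have hyM : y ∈ M := by
    apply hWid (y, v) _ hyQ (frechet_mem_limiting hvF)
    apply hball
    rw [Metric.mem_ball, Prod.dist_eq]
    exact max_lt (lt_of_lt_of_le hdym' (min_le_right _ _)) hdvvb'
  refine ⟨y, hyM, lt_of_lt_of_le hdym' (min_le_left _ _), ?_, ?_⟩
  · have : 0 ≤ ⟪vb, y - x⟫ := le_trans (by positivity) hfx'
    rw [inner_sub_right] at this; linarith
  · intro hxne hyeq
    apply hxne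
    have h0 : ⟪vb, y - x⟫ ≤ 0 := by
      rw [hyeq, inner_sub_right]; linarith
    have ha2 : a ^ 2 ≤ 0 := by nlinarith
    have ha0 : a = 0 := le_antisymm (by nlinarith) hann
    have : y = x := by
      rwa [ha, norm_sub_eq_zero_iff] at ha0
    rw [← hyeq, this]

end AuxProof

/-- Restricted optimality. -/
theorem statement17 {n : ℕ} (Q : Set (Euc n)) (hQ : IsClosed Q)
    (M : Set (Euc n)) (hMQ : M ⊆ Q) (xb : Euc n)
    (vb : Euc n) (hvb : vb ∈ proxNormalCone Q xb)
    (hid : IdentifiableIn Q M xb vb) :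
    ((∀ᶠ x in 𝓝 xb, x ∈ M → ⟪vb, x⟫ ≤ ⟪vb, xb⟫) ↔
      (∀ᶠ x in 𝓝 xb, x ∈ Q → ⟪vb, x⟫ ≤ ⟪vb, xb⟫)) ∧
    ((∀ᶠ x in 𝓝 xb, x ∈ M → x ≠ xb → ⟪vb, x⟫ < ⟪vb, xb⟫) ↔
      (∀ᶠ x in 𝓝 xb, x ∈ Q → x ≠ xb → ⟪vb, x⟫ < ⟪vb, xb⟫)) := by
  constructor
  · constructor
    · intro h
      obtain ⟨ε, hε, hεM⟩ := Metric.eventually_nhds_iff.mp h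
      obtain ⟨δ1, hδ1, hkey⟩ := key_lemma hQ hvb hid hε
      rw [Metric.eventually_nhds_iff]
      refine ⟨δ1, hδ1, fun x hxd hxQ => ?_⟩
      by_contra hc
      push_neg at hc
      obtain ⟨y, hyM, hyd, hyge, _⟩ := hkey x hxQ hxd hc.le
      have := hεM hyd hyM
      linarith
    · intro h
      exact h.mono fun x hx hxM => hx (hMQ hxM)
  · constructor
    · intro h
      obtain ⟨ε, hε, hεM⟩ := Metric.eventually_nhds_iff.mp h
      obtain ⟨δ1, hδ1, hkey⟩ := key_lemma hQ hvb hid hε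
      rw [Metric.eventually_nhds_iff]
      refine ⟨δ1, hδ1, fun x hxd hxQ hxne => ?_⟩
      by_contra hc
      push_neg at hc
      obtain ⟨y, hyM, hyd, hyge, hyne⟩ := hkey x hxQ hxd hc
      have := hεM hyd hyM (hyne hxne)
      linarith
    · intro h
      exact h.mono fun x hx hxM => hx (hMQ hxM)
end
end
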